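/- arXiv:1402.4697 — 2 statements merged into one kernel-verified Lean document; each statement's English description precedes it below -/
import Mathlib

section
/- Let ω be a modulus of continuity satisfying inf_{0<t≤1} ω(t²)/ω(t) > 0, let f ∈ Lip_ω, let E be a closed subset of the boundary zero set E_f, and let S be a singular inner function with σ(S) ⊆ E and total mass ∫_𝕋 dμ_S ≤ M for a constant M > 0. Then S·f ∈ Lip_ω and ‖S·f‖_ω ≤ c·‖f‖_ω, where c > 0 depends only on ω and M. If moreover f ∈ J_ω(E), then S·f ∈ J_ω(E). -/
open Complex Metric Set MeasureTheory Filter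

noncomputable section

/-- A modulus of continuity: nonnegative, nondecreasing, continuous on `[0,2]`,
vanishing at `0`, not identically zero, with `t ↦ ω t / t` nonincreasing. -/
structure ModulusOfContinuity where
  toFun : ℝ → ℝ
  nonneg : ∀ t ∈ Set.Icc (0:ℝ) 2, 0 ≤ toFun t
  mono : MonotoneOn toFun (Set.Icc (0:ℝ) 2)
  cont : ContinuousOn toFun (Set.Icc (0:ℝ) 2)
  zero : toFun 0 = 0
  nontrivial : ∃ t ∈ Set.Icc (0:ℝ) 2, toFun t ≠ 0
  quot_anti : AntitoneOn (fun t => toFun t / t) (Set.Ioc (0:ℝ) 2)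

instance : CoeFun ModulusOfContinuity (fun _ => ℝ → ℝ) := ⟨ModulusOfContinuity.toFun⟩

/-- The condition `inf_{0<t≤1} ω(t²)/ω(t) > 0`. -/
def EtaPos (ω : ModulusOfContinuity) : Prop :=
  ∃ η > (0:ℝ), ∀ t ∈ Set.Ioc (0:ℝ) 1, η * ω t ≤ ω (t ^ 2)

/-- Membership in `H^∞`: bounded analytic on the open unit disk. -/
def MemHinf (f : ℂ → ℂ) : Prop :=
  DifferentiableOn ℂ f (ball (0:ℂ) 1) ∧ ∃ M : ℝ, ∀ z ∈ ball (0:ℂ) 1, ‖f z‖ ≤ M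

/-- Membership in the big Lipschitz algebra `Lip_ω` (boundary form, by Tamrazov's theorem):
continuous on the closed disk, analytic in the open disk, and `ω`-Lipschitz on the circle. -/
def MemLip (ω : ModulusOfContinuity) (f : ℂ → ℂ) : Prop :=
  ContinuousOn f (closedBall (0:ℂ) 1) ∧ DifferentiableOn ℂ f (ball (0:ℂ) 1) ∧
    ∃ C : ℝ, ∀ ξ ∈ sphere (0:ℂ) 1, ∀ ζ ∈ sphere (0:ℂ) 1, ξ ≠ ζ →
      ‖f ξ - f ζ‖ ≤ C * ω (‖ξ - ζ‖)

/-- Supremum norm over the closed unit disk. -/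
def supNorm (f : ℂ → ℂ) : ℝ :=
  sSup ((fun z => ‖f z‖) '' closedBall (0:ℂ) 1)

/-- The `ω`-Lipschitz seminorm on the unit circle. -/
def lipSemi (ω : ModulusOfContinuity) (f : ℂ → ℂ) : ℝ :=
  sSup ((fun p : ℂ × ℂ => ‖f p.1 - f p.2‖ / ω (‖p.1 - p.2‖)) ''
    {p : ℂ × ℂ | p.1 ∈ sphere (0:ℂ) 1 ∧ p.2 ∈ sphere (0:ℂ) 1 ∧ p.1 ≠ p.2})

/-- The norm `‖f‖_ω = ‖f‖_∞ + sup_{ξ≠ζ∈𝕋} |f ξ - f ζ|/ω(|ξ-ζ|)`. -/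
def lipNorm (ω : ModulusOfContinuity) (f : ℂ → ℂ) : ℝ := supNorm f + lipSemi ω f

/-- A closed ideal of the Banach algebra `Lip_ω`. -/
structure ClosedIdealLip (ω : ModulusOfContinuity) where
  carrier : Set (ℂ → ℂ)
  mem_lip : ∀ f ∈ carrier, MemLip ω f
  add_mem : ∀ f ∈ carrier, ∀ g ∈ carrier, (fun z => f z + g z) ∈ carrier
  smul_mem : ∀ (c : ℂ), ∀ f ∈ carrier, (fun z => c * f z) ∈ carrier
  mul_mem : ∀ f ∈ carrier, ∀ g, MemLip ω g → (fun z => f z * g z) ∈ carrier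
  closed_mem : ∀ f, MemLip ω f →
    (∀ ε > (0:ℝ), ∃ g ∈ carrier, lipNorm ω (fun z => f z - g z) ≤ ε) → f ∈ carrier

/-- The hull `E_I = {ξ ∈ 𝕋 : f ξ = 0 for all f ∈ I}`. -/
def hullSet (I : Set (ℂ → ℂ)) : Set ℂ :=
  {ξ | ξ ∈ sphere (0:ℂ) 1 ∧ ∀ f ∈ I, f ξ = 0}

/-- `E(δ) = {ξ ∈ 𝕋 : d(ξ,E) ≤ δ}`. -/
def ENbhd (E : Set ℂ) (δ : ℝ) : Set ℂ :=
  {ξ | ξ ∈ sphere (0:ℂ) 1 ∧ Metric.infDist ξ E ≤ δ}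

/-- The condition `lim_{δ→0} sup_{ξ≠ζ∈E(δ)} |f ξ - f ζ|/ω(|ξ-ζ|) = 0`. -/
def JCond (ω : ModulusOfContinuity) (E : Set ℂ) (f : ℂ → ℂ) : Prop :=
  ∀ ε > (0:ℝ), ∃ δ > (0:ℝ), ∀ ξ ∈ ENbhd E δ, ∀ ζ ∈ ENbhd E δ, ξ ≠ ζ →
    ‖f ξ - f ζ‖ ≤ ε * ω (‖ξ - ζ‖)

/-- `I_ω(E)`. -/
def MemI (ω : ModulusOfContinuity) (E : Set ℂ) (f : ℂ → ℂ) : Prop :=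
  MemLip ω f ∧ ∀ ξ ∈ E, f ξ = 0

/-- `J_ω(E)`. -/
def MemJ (ω : ModulusOfContinuity) (E : Set ℂ) (f : ℂ → ℂ) : Prop :=
  MemI ω E f ∧ JCond ω E f

/-- `u` divides `f` in `H^∞`: `f / u ∈ H^∞`. -/
def DividesIn (u f : ℂ → ℂ) : Prop :=
  ∃ h : ℂ → ℂ, MemHinf h ∧ ∀ z ∈ ball (0:ℂ) 1, f z = u z * h z

/-- An inner function: bounded by 1, analytic on the disk, with radial limits of
modulus 1 at almost every boundary point. -/
def IsInner (u : ℂ → ℂ) : Prop :=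
  DifferentiableOn ℂ u (ball (0:ℂ) 1) ∧ (∀ z ∈ ball (0:ℂ) 1, ‖u z‖ ≤ 1) ∧
  ∀ᵐ (θ : ℝ) ∂(volume : Measure ℝ),
    Tendsto (fun r : ℝ => ‖u ((r : ℂ) * Complex.exp ((θ : ℂ) * Complex.I))‖)
      (nhdsWithin 1 (Set.Iio 1)) (nhds 1)

/-- `U` is the greatest common inner divisor of the inner parts of the nonzero members of `I`. -/
def IsGcdInner (I : Set (ℂ → ℂ)) (U : ℂ → ℂ) : Prop :=
  IsInner U ∧ (∀ f ∈ I, f ≠ 0 → DividesIn U f) ∧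
  ∀ W : ℂ → ℂ, IsInner W → (∀ f ∈ I, f ≠ 0 → DividesIn W f) → DividesIn W U

/-- `J_ω(E, U)`. -/
def MemJU (ω : ModulusOfContinuity) (E : Set ℂ) (U : ℂ → ℂ) (f : ℂ → ℂ) : Prop :=
  MemLip ω f ∧ (∀ ξ ∈ E, f ξ = 0) ∧ DividesIn U f ∧ JCond ω E f

/-- `E ⊆ 𝕋` has zero Lebesgue (arclength) measure. -/
def CircNull (E : Set ℂ) : Prop :=
  volume {θ : ℝ | θ ∈ Set.Ico (0:ℝ) (2 * Real.pi) ∧ Complex.exp ((θ : ℂ) * Complex.I) ∈ E} = 0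

/-- The spectrum `σ(U) = {λ ∈ 𝔻̄ : liminf_{z→λ, z∈𝔻} |U z| = 0}`. -/
def innerSpec (U : ℂ → ℂ) : Set ℂ :=
  {l | l ∈ closedBall (0:ℂ) 1 ∧
    Filter.liminf (fun z => ‖U z‖) (nhdsWithin l (ball (0:ℂ) 1)) = 0}

/-- An outer function: `F z = c · exp((1/2π) ∫ (e^{iθ}+z)/(e^{iθ}-z) w(θ) dθ)`
with `|c| = 1` and `w` integrable. -/
def IsOuter (F : ℂ → ℂ) : Prop :=
  ∃ c : ℂ, ‖c‖ = 1 ∧ ∃ w : ℝ → ℝ,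
    IntervalIntegrable w volume 0 (2 * Real.pi) ∧
    ∀ z ∈ ball (0:ℂ) 1, F z = c * Complex.exp ((1 / (2 * Real.pi) : ℂ) *
      ∫ θ in (0:ℝ)..(2 * Real.pi),
        ((Complex.exp ((θ : ℂ) * Complex.I) + z) / (Complex.exp ((θ : ℂ) * Complex.I) - z)) *
          (w θ : ℂ))

/-- Boundary zero set `E_f = {ξ ∈ 𝕋 : f ξ = 0}`. -/
def bdryZeroSet (f : ℂ → ℂ) : Set ℂ := {ξ | ξ ∈ sphere (0:ℂ) 1 ∧ f ξ = 0}

/-- `Δ ∈ Ω_E`: `Δ` is a union of connected components (complementary arcs) of `𝕋 \ E`. -/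
def MemOmega (E : Set ℂ) (Δ : Set ℂ) : Prop :=
  Δ ⊆ sphere (0:ℂ) 1 \ E ∧
  ∀ z ∈ Δ, connectedComponentIn (sphere (0:ℂ) 1 \ E) z ⊆ Δ

/-- The Korenblum outer function
`f_Γ z = exp((1/2π) ∫_Γ (ξ+z)/(ξ-z) log|f ξ| |dξ|)`. -/
def korenblum (f : ℂ → ℂ) (Γ : Set ℂ) (z : ℂ) : ℂ :=
  Complex.exp ((1 / (2 * Real.pi) : ℂ) *
    ∫ θ in (0:ℝ)..(2 * Real.pi),
      Set.indicator Γ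
        (fun ξ => ((ξ + z) / (ξ - z)) * (Real.log (‖f ξ‖) : ℂ))
        (Complex.exp ((θ : ℂ) * Complex.I)))

/-- A singular inner function with associated positive singular measure `μ`
(carried by `[0,2π)` via `θ ↦ e^{iθ}`). -/
def IsSingularInnerWith (S : ℂ → ℂ) (μ : Measure ℝ) : Prop :=
  μ Set.univ < ⊤ ∧ μ (Set.Ico (0:ℝ) (2 * Real.pi))ᶜ = 0 ∧
  μ.MutuallySingular volume ∧
  ∀ z ∈ ball (0:ℂ) 1, S z = Complex.exp (-(1 / (2 * Real.pi) : ℂ) *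
    ∫ θ, ((Complex.exp ((θ : ℂ) * Complex.I) + z) /
      (Complex.exp ((θ : ℂ) * Complex.I) - z)) ∂μ)

/-- Single Blaschke factor with zero `w` (with the conventions that `w = 0` gives the factor
`z`, and `|w| = 1` gives the constant factor `1`, used for padding). -/
def blaschkeFactor (w z : ℂ) : ℂ :=
  if w = 0 then z
  else ((‖w‖ : ℂ) / w) * (w - z) / (1 - (starRingEnd ℂ) w * z)

/-- `B` is the Blaschke product with zero sequence `a` (boundary points of the sequence
serve as padding, contributing factors `1`). -/
def IsBlaschkeOf (B : ℂ → ℂ) (a : ℕ → ℂ) : Prop :=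
  (∀ n, ‖a n‖ ≤ 1) ∧ Summable (fun n => 1 - ‖a n‖) ∧
  ∀ z ∈ ball (0:ℂ) 1, HasProd (fun n => blaschkeFactor (a n) z) (B z)

/-- Total-variation distance between two (finite) measures. -/
def tvDist (μ ν : Measure ℝ) : ℝ :=
  sSup {r : ℝ | ∃ s : Set ℝ, MeasurableSet s ∧ r = |(μ s).toReal - (ν s).toReal|}

/-- The function `z ↦ exp(-(1/2π) ∫ (e^{iθ}+z)/(e^{iθ}-z) dμ(θ))`, defining a singular
inner function on the disk together with its analytic extension off the support of `μ`. -/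
def singExp (μ : Measure ℝ) (z : ℂ) : ℂ :=
  Complex.exp (-(1 / (2 * Real.pi) : ℂ) *
    ∫ θ, ((Complex.exp ((θ : ℂ) * Complex.I) + z) /
      (Complex.exp ((θ : ℂ) * Complex.I) - z)) ∂μ)

/-- `a_U(ζ) = Σ_n (1-|z_n|²)/|ζ-z_n|² + (1/π) ∫ |e^{iθ}-ζ|⁻² dμ(θ)` for an inner function
with zeros `a` and singular measure `μ`. -/
def aFun (a : ℕ → ℂ) (μ : Measure ℝ) (ζ : ℂ) : ℝ :=
  (∑' n, (1 - ‖a n‖ ^ 2) / ‖ζ - a n‖ ^ 2) +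
  (1 / Real.pi) * ∫ θ, (1 / ‖Complex.exp ((θ : ℂ) * Complex.I) - ζ‖ ^ 2) ∂μ

/-!
The measure `μ` of `S` is carried by `K = e^{i supp μ}`, and `K ⊆ σ(S) ⊆ E`: a singular measure
has infinite density `μ`-almost everywhere, so the Poisson integral of `μ` blows up along radii
ending near any point of `K`. Off `K` one has `|S| ≤ 1` and
`|S ξ - S ζ| ≤ (M / π) |ξ - ζ| / (d(ξ, K) d(ζ, K))`, while `|f ζ| ≤ ‖f‖_ω ω(d(ζ, K))` because
`f` vanishes on `K`. For `t = |ξ - ζ|` small and `d(ζ, K) ≤ d(ξ, K)`, split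
`S f(ξ) - S f(ζ) = S ξ (f ξ - f ζ) + f ζ (S ξ - S ζ)`. If `d(ζ, K) ≤ 2√t` the last term is at
most `2 ‖f‖_ω ω(2√t) ≤ 4 ‖f‖_ω ω(√t)`, which is `O(ω t)` by `ω(t²) ≥ η ω(t)`; otherwise
`ω(d)/d ≤ ω(2√t)/(2√t)` gives the same bound. Running the argument with the local constants
of `J_ω(E)` near `E` proves the second claim.
-/
open scoped Real Topology

lemma norm_sub_le_two_of_mem_sphere {ξ ζ : ℂ} (hξ : ξ ∈ sphere (0:ℂ) 1)
    (hζ : ζ ∈ sphere (0:ℂ) 1) : ‖ξ - ζ‖ ≤ 2 := by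
  rw [mem_sphere_zero_iff_norm] at hξ hζ
  linarith [norm_sub_le ξ ζ]

lemma infDist_le_two_of_subset_sphere {K : Set ℂ} (hK : K ⊆ sphere (0:ℂ) 1) {z : ℂ}
    (hz : z ∈ sphere (0:ℂ) 1) : infDist z K ≤ 2 := by
  rcases K.eq_empty_or_nonempty with rfl | ⟨k, hk⟩
  · simp
  · exact (infDist_le_dist_of_mem hk).trans
      (by rw [dist_eq_norm]; exact norm_sub_le_two_of_mem_sphere hz (hK hk))

lemma one_sub_norm_le_infDist {K : Set ℂ} (hK : K ⊆ sphere (0:ℂ) 1) (hKne : K.Nonempty)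
    (z : ℂ) : 1 - ‖z‖ ≤ infDist z K := by
  refine (le_infDist hKne).2 fun k hk => ?_
  rw [dist_comm, dist_eq_norm, ← mem_sphere_zero_iff_norm.1 (hK hk)]
  exact norm_sub_norm_le k z

lemma norm_exp_ofReal_mul_I_sub_exp_le (a b : ℝ) :
    ‖exp (a * I) - exp (b * I)‖ ≤ |a - b| := by
  have h : exp (a * I) - exp (b * I) = exp (b * I) * (exp (I * ↑(a - b)) - 1) := by
    rw [mul_sub, ← Complex.exp_add]; push_cast; ring_nf
  rw [h, norm_mul, norm_exp_ofReal_mul_I, one_mul, ← Real.norm_eq_abs]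
  exact Real.norm_exp_I_mul_ofReal_sub_one_le

lemma norm_exp_sub_exp_le_of_re_nonpos {a b : ℂ} (ha : a.re ≤ 0) (hb : b.re ≤ 0) :
    ‖exp a - exp b‖ ≤ ‖a - b‖ := by
  simpa using Convex.norm_image_sub_le_of_norm_hasDerivWithin_le (f := exp) (f' := exp) (C := 1)
    (s := {z : ℂ | z.re ≤ 0}) (fun z _ => (hasDerivAt_exp z).hasDerivWithinAt)
    (fun z hz => by rw [norm_exp]; exact Real.exp_le_one_iff.mpr hz)
    (convex_halfSpace_re_le 0) hb ha

namespace ModulusOfContinuity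

variable (ω : ModulusOfContinuity)

lemma pos {t : ℝ} (h0 : 0 < t) (h2 : t ≤ 2) : 0 < ω t := by
  obtain ⟨t₀, ht₀, hne⟩ := ω.nontrivial
  have hωt₀ : 0 < ω t₀ := (ω.nonneg t₀ ht₀).lt_of_ne' hne
  have ht₀0 : 0 < t₀ := ht₀.1.lt_of_ne fun h => hne (h ▸ ω.zero)
  rcases le_total t₀ t with h | h
  · exact hωt₀.trans_le (ω.mono ht₀ ⟨h0.le, h2⟩ h)
  · have hq : ω t₀ / t₀ ≤ ω t / t := ω.quot_anti ⟨h0, h2⟩ ⟨ht₀0, ht₀.2⟩ h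
    exact (div_pos_iff_of_pos_right h0).1 ((div_pos hωt₀ ht₀0).trans_le hq)

lemma apply_mul_le_apply_mul_of_le {u v : ℝ} (hu : 0 < u) (huv : u ≤ v) (hv : v ≤ 2) :
    ω v * u ≤ ω u * v := by
  have hq : ω v / v ≤ ω u / u := ω.quot_anti ⟨hu, huv.trans hv⟩ ⟨hu.trans_le huv, hv⟩ huv
  rwa [div_le_div_iff₀ (hu.trans_le huv) hu] at hq

lemma le_two_mul {s : ℝ} (hs : 0 < s) (hs1 : s ≤ 1) : ω (2 * s) ≤ 2 * ω s := by
  have := ω.apply_mul_le_apply_mul_of_le hs (by linarith : s ≤ 2 * s) (by linarith)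
  nlinarith

lemma pos_of_mem_sphere {ξ ζ : ℂ} (hξ : ξ ∈ sphere (0:ℂ) 1) (hζ : ζ ∈ sphere (0:ℂ) 1)
    (hne : ξ ≠ ζ) : 0 < ω ‖ξ - ζ‖ :=
  ω.pos (norm_pos_iff.2 (sub_ne_zero.2 hne)) (norm_sub_le_two_of_mem_sphere hξ hζ)

lemma tendsto_nhdsGT_zero : Tendsto ω (𝓝[>] 0) (𝓝 0) := by
  have h := (ω.cont 0 ⟨le_rfl, zero_le_two⟩).mono_of_mem_nhdsWithin (Icc_mem_nhdsGT two_pos)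
  rwa [ContinuousWithinAt, ω.zero] at h

variable {ω} {η : ℝ}

lemma mul_le_of_le_two_mul_sqrt (hη : 0 < η)
    (hηω : ∀ s ∈ Ioc (0:ℝ) 1, η * ω s ≤ ω (s ^ 2)) {t d : ℝ} (ht : 0 < t) (ht4 : t < 1 / 4)
    (hd : 0 ≤ d) (hdt : d ≤ 2 * √t) : η * ω d ≤ 2 * ω t := by
  have hs : 0 < √t := Real.sqrt_pos.2 ht
  have hs2 : √t < 1 / 2 := by
    rw [Real.sqrt_lt' (by norm_num)]; linarith
  have hd2s : ω d ≤ ω (2 * √t) := ω.mono ⟨hd, by linarith⟩ ⟨by positivity, by linarith⟩ hdt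
  have hsq := hηω (√t) ⟨hs, by linarith⟩
  rw [Real.sq_sqrt ht.le] at hsq
  nlinarith [ω.le_two_mul hs (by linarith)]

lemma two_mul_mul_le_of_two_mul_sqrt_le (hη : 0 < η)
    (hηω : ∀ s ∈ Ioc (0:ℝ) 1, η * ω s ≤ ω (s ^ 2)) {t d d' : ℝ} (ht : 0 < t) (ht4 : t < 1 / 4)
    (htd : 2 * √t ≤ d) (hdd' : d ≤ d') (hd2 : d ≤ 2) :
    2 * η * (ω d * t) ≤ ω t * (d * d') := by
  have hs : 0 < √t := Real.sqrt_pos.2 ht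
  have hquot := ω.apply_mul_le_apply_mul_of_le (by positivity) htd hd2
  have hnear := mul_le_of_le_two_mul_sqrt hη hηω ht ht4 (by positivity) le_rfl
  have hωt : 0 ≤ ω t := ω.nonneg t ⟨ht.le, by linarith⟩
  have hd : 0 < d := by linarith
  calc 2 * η * (ω d * t) = η * √t * (ω d * (2 * √t)) := by
        linear_combination (2 * η * ω d) * (Real.mul_self_sqrt ht.le).symm
    _ ≤ η * √t * (ω (2 * √t) * d) := by gcongr
    _ = √t * d * (η * ω (2 * √t)) := by ring
    _ ≤ √t * d * (2 * ω t) := by gcongr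
    _ = ω t * (d * (2 * √t)) := by ring
    _ ≤ ω t * (d * d') := by gcongr; linarith

/-- For `d ≤ 2√t` use `x ≤ 2`, otherwise `x ≤ m t / (d d')`. -/
lemma mul_le_of_le_min (hη : 0 < η) (hηω : ∀ s ∈ Ioc (0:ℝ) 1, η * ω s ≤ ω (s ^ 2))
    {t d d' x m : ℝ} (ht : 0 < t) (ht4 : t < 1 / 4) (hd : 0 < d) (hdd' : d ≤ d') (hd2 : d ≤ 2)
    (hm : 0 ≤ m) (hx2 : x ≤ 2) (hxm : x ≤ m * t / (d * d')) :
    ω d * x ≤ (4 / η + m / (2 * η)) * ω t := by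
  have hωt : 0 ≤ ω t := ω.nonneg t ⟨ht.le, by linarith⟩
  have hωd : 0 ≤ ω d := ω.nonneg d ⟨hd.le, hd2⟩
  rcases le_total d (2 * √t) with hnear | hfar
  · have h := mul_le_of_le_two_mul_sqrt hη hηω ht ht4 hd.le hnear
    calc ω d * x ≤ ω d * 2 := by gcongr
      _ ≤ 4 / η * ω t := by rw [div_mul_eq_mul_div, le_div_iff₀ hη]; linarith
      _ ≤ (4 / η + m / (2 * η)) * ω t := by gcongr; exact le_add_of_nonneg_right (by positivity)
  · have h := two_mul_mul_le_of_two_mul_sqrt_le hη hηω ht ht4 hfar hdd' hd2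
    have hd' : 0 < d' := hd.trans_le hdd'
    calc ω d * x ≤ ω d * (m * t / (d * d')) := by gcongr
      _ = m * (2 * η * (ω d * t)) / (2 * η * (d * d')) := by field_simp
      _ ≤ m * (ω t * (d * d')) / (2 * η * (d * d')) := by gcongr
      _ = m / (2 * η) * ω t := by field_simp
      _ ≤ (4 / η + m / (2 * η)) * ω t := by gcongr; exact le_add_of_nonneg_left (by positivity)

end ModulusOfContinuity

def herglotzKernel (z : ℂ) (θ : ℝ) : ℂ := (exp (θ * I) + z) / (exp (θ * I) - z)

lemma singExp_eq_exp_integral (μ : Measure ℝ) (z : ℂ) :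
    singExp μ z = exp (-(1 / (2 * π) : ℂ) * ∫ θ, herglotzKernel z θ ∂μ) := rfl

lemma measurable_herglotzKernel (z : ℂ) : Measurable (herglotzKernel z) := by
  unfold herglotzKernel; fun_prop

lemma norm_herglotzKernel_le (z : ℂ) (θ : ℝ) :
    ‖herglotzKernel z θ‖ ≤ (1 + ‖z‖) / ‖exp (θ * I) - z‖ := by
  rw [herglotzKernel, norm_div]
  gcongr
  exact (norm_add_le _ _).trans_eq (by rw [norm_exp_ofReal_mul_I])

lemma re_herglotzKernel (z : ℂ) (θ : ℝ) :
    (herglotzKernel z θ).re = (1 - ‖z‖ ^ 2) / ‖exp (θ * I) - z‖ ^ 2 := by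
  have h : (herglotzKernel z θ).re =
      (normSq (exp (θ * I)) - normSq z) / normSq (exp (θ * I) - z) := by
    rw [herglotzKernel, Complex.div_re]
    simp only [normSq_apply, add_re, add_im, sub_re, sub_im]
    ring
  rw [h, ← Complex.sq_norm, ← Complex.sq_norm, ← Complex.sq_norm, norm_exp_ofReal_mul_I, one_pow]

lemma re_herglotzKernel_nonneg {z : ℂ} (hz : ‖z‖ ≤ 1) (θ : ℝ) :
    0 ≤ (herglotzKernel z θ).re := by
  rw [re_herglotzKernel]
  exact div_nonneg (by nlinarith [norm_nonneg z]) (sq_nonneg _)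

lemma norm_herglotzKernel_sub {z w : ℂ} {θ : ℝ} (hz : exp (θ * I) ≠ z) (hw : exp (θ * I) ≠ w) :
    ‖herglotzKernel z θ - herglotzKernel w θ‖ =
      2 * ‖z - w‖ / (‖exp (θ * I) - z‖ * ‖exp (θ * I) - w‖) := by
  have h : herglotzKernel z θ - herglotzKernel w θ =
      2 * exp (θ * I) * (z - w) / ((exp (θ * I) - z) * (exp (θ * I) - w)) := by
    rw [herglotzKernel, herglotzKernel, div_sub_div _ _ (sub_ne_zero.2 hz) (sub_ne_zero.2 hw)]
    ring
  rw [h, norm_div, norm_mul, norm_mul, norm_mul, norm_exp_ofReal_mul_I]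
  norm_num

lemma hasDerivAt_herglotzKernel {z : ℂ} {θ : ℝ} (hz : exp (θ * I) ≠ z) :
    HasDerivAt (fun z => herglotzKernel z θ) (2 * exp (θ * I) / (exp (θ * I) - z) ^ 2) z := by
  have h := ((hasDerivAt_id' z).const_add (exp (θ * I))).div
    ((hasDerivAt_id' z).const_sub (exp (θ * I))) (sub_ne_zero.2 hz)
  exact h.congr_deriv (by ring)

lemma re_integral_herglotzKernel_nonneg (μ : Measure ℝ) {z : ℂ} (hz : ‖z‖ ≤ 1) :
    0 ≤ (∫ θ, herglotzKernel z θ ∂μ).re := by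
  by_cases hint : Integrable (herglotzKernel z) μ
  · rw [← RCLike.re_to_complex, ← integral_re hint]
    exact integral_nonneg (re_herglotzKernel_nonneg hz)
  · rw [integral_undef hint, zero_re]

lemma re_neg_inv_two_pi_mul (w : ℂ) :
    (-(1 / (2 * π) : ℂ) * w).re = -(1 / (2 * π)) * w.re := by
  have hcast : (-(1 / (2 * π)) : ℂ) = ((-(1 / (2 * π)) : ℝ) : ℂ) := by push_cast; ring
  rw [hcast, re_ofReal_mul]

lemma re_singExp_exponent_nonpos (μ : Measure ℝ) {z : ℂ} (hz : ‖z‖ ≤ 1) :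
    (-(1 / (2 * π) : ℂ) * ∫ θ, herglotzKernel z θ ∂μ).re ≤ 0 := by
  rw [re_neg_inv_two_pi_mul]
  exact mul_nonpos_of_nonpos_of_nonneg (by rw [neg_nonpos]; positivity)
    (re_integral_herglotzKernel_nonneg μ hz)

lemma norm_singExp_le_one (μ : Measure ℝ) {z : ℂ} (hz : ‖z‖ ≤ 1) : ‖singExp μ z‖ ≤ 1 := by
  rw [singExp_eq_exp_integral, norm_exp, Real.exp_le_one_iff]
  exact re_singExp_exponent_nonpos μ hz

lemma norm_singExp_of_integrable {μ : Measure ℝ} {z : ℂ} (hz : Integrable (herglotzKernel z) μ) :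
    ‖singExp μ z‖ = Real.exp (-(1 / (2 * π)) * ∫ θ, (herglotzKernel z θ).re ∂μ) := by
  rw [singExp_eq_exp_integral, norm_exp, re_neg_inv_two_pi_mul, ← RCLike.re_to_complex,
    ← integral_re hz]
  rfl

def circleSupport (μ : Measure ℝ) : Set ℂ := (fun θ : ℝ => exp (θ * I)) '' μ.support

section circleSupport

variable {μ : Measure ℝ}

lemma circleSupport_subset_sphere : circleSupport μ ⊆ sphere (0:ℂ) 1 := by
  rintro _ ⟨θ, -, rfl⟩
  simp [norm_exp_ofReal_mul_I]

lemma isCompact_circleSupport (hμ : μ (Ico 0 (2 * π))ᶜ = 0) : IsCompact (circleSupport μ) := by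
  have hsub : μ.support ⊆ Icc 0 (2 * π) :=
    Measure.support_subset_of_isClosed isClosed_Icc
      (measure_mono_null (compl_subset_compl.2 Ico_subset_Icc_self) hμ)
  exact (isCompact_Icc.of_isClosed_subset Measure.isClosed_support hsub).image (by fun_prop)

lemma infDist_circleSupport_le {θ : ℝ} (hθ : θ ∈ μ.support) (z : ℂ) :
    infDist z (circleSupport μ) ≤ ‖exp (θ * I) - z‖ := by
  rw [norm_sub_rev, ← dist_eq_norm]
  exact infDist_le_dist_of_mem (mem_image_of_mem _ hθ)

lemma integrable_herglotzKernel [IsFiniteMeasure μ] {z : ℂ}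
    (hz : 0 < infDist z (circleSupport μ)) : Integrable (herglotzKernel z) μ := by
  refine Integrable.mono' (integrable_const ((1 + ‖z‖) / infDist z (circleSupport μ)))
    (measurable_herglotzKernel z).aestronglyMeasurable ?_
  filter_upwards [Measure.support_mem_ae] with θ hθ
  exact (norm_herglotzKernel_le z θ).trans (by gcongr; exact infDist_circleSupport_le hθ z)

lemma norm_singExp_sub_le [IsFiniteMeasure μ] {z w : ℂ} (hz : ‖z‖ ≤ 1) (hw : ‖w‖ ≤ 1)
    (hdz : 0 < infDist z (circleSupport μ)) (hdw : 0 < infDist w (circleSupport μ)) :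
    ‖singExp μ z - singExp μ w‖ ≤
      μ.real univ / π * ‖z - w‖ / (infDist z (circleSupport μ) * infDist w (circleSupport μ)) := by
  set dz := infDist z (circleSupport μ)
  set dw := infDist w (circleSupport μ)
  have hint : ‖(∫ θ, herglotzKernel z θ ∂μ) - ∫ θ, herglotzKernel w θ ∂μ‖ ≤
      2 * ‖z - w‖ / (dz * dw) * μ.real univ := by
    rw [← integral_sub (integrable_herglotzKernel hdz) (integrable_herglotzKernel hdw)]
    refine norm_integral_le_of_norm_le_const ?_
    filter_upwards [Measure.support_mem_ae] with θ hθ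
    have h1 := infDist_circleSupport_le hθ z
    have h2 := infDist_circleSupport_le hθ w
    rw [norm_herglotzKernel_sub (sub_ne_zero.1 (norm_pos_iff.1 (hdz.trans_le h1)))
      (sub_ne_zero.1 (norm_pos_iff.1 (hdw.trans_le h2)))]
    gcongr
  calc ‖singExp μ z - singExp μ w‖
      ≤ ‖-(1 / (2 * π) : ℂ) * ((∫ θ, herglotzKernel z θ ∂μ) - ∫ θ, herglotzKernel w θ ∂μ)‖ := by
        rw [mul_sub]
        exact norm_exp_sub_exp_le_of_re_nonpos (re_singExp_exponent_nonpos μ hz)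
          (re_singExp_exponent_nonpos μ hw)
    _ ≤ 1 / (2 * π) * (2 * ‖z - w‖ / (dz * dw) * μ.real univ) := by
        rw [norm_mul, norm_neg, norm_div, norm_one, norm_mul, Complex.norm_ofNat, norm_real,
          Real.norm_of_nonneg Real.pi_pos.le]
        gcongr
    _ = μ.real univ / π * ‖z - w‖ / (dz * dw) := by
        field_simp

lemma differentiableAt_singExp [IsFiniteMeasure μ] {z₀ : ℂ}
    (hz₀ : 0 < infDist z₀ (circleSupport μ)) : DifferentiableAt ℂ (singExp μ) z₀ := by
  set r := infDist z₀ (circleSupport μ) / 2 with hr_def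
  have hr : 0 < r := half_pos hz₀
  have hdist : ∀ θ ∈ μ.support, ∀ z ∈ ball z₀ r, r ≤ ‖exp (θ * I) - z‖ := by
    intro θ hθ z hz
    rw [mem_ball, dist_eq_norm] at hz
    linarith [infDist_circleSupport_le hθ z₀, norm_sub_le_norm_sub_add_norm_sub (exp (θ * I)) z z₀]
  have hne : ∀ θ ∈ μ.support, ∀ z ∈ ball z₀ r, exp (θ * I) - z ≠ 0 := fun θ hθ z hz =>
    norm_pos_iff.1 (hr.trans_le (hdist θ hθ z hz))
  have key := hasDerivAt_integral_of_dominated_loc_of_deriv_le (μ := μ)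
    (F := fun z θ => herglotzKernel z θ)
    (F' := fun z θ => 2 * exp (θ * I) / (exp (θ * I) - z) ^ 2) (bound := fun _ => 2 / r ^ 2)
    (ball_mem_nhds z₀ hr)
    (Eventually.of_forall fun z => (measurable_herglotzKernel z).aestronglyMeasurable)
    (integrable_herglotzKernel hz₀) (Measurable.aestronglyMeasurable (by fun_prop)) ?_
    (integrable_const _) ?_
  · exact (key.2.const_mul _).cexp.differentiableAt
  · filter_upwards [Measure.support_mem_ae] with θ hθ z hz
    rw [norm_div, norm_mul, norm_pow, norm_exp_ofReal_mul_I, Complex.norm_ofNat, mul_one]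
    gcongr
    exact hdist θ hθ z hz
  · filter_upwards [Measure.support_mem_ae] with θ hθ z hz
    exact hasDerivAt_herglotzKernel (sub_ne_zero.1 (hne θ hθ z hz))

end circleSupport

section density

variable {μ : Measure ℝ} [IsFiniteMeasure μ]

lemma ae_eventually_mul_le_measureReal_closedBall (hμ : μ ⟂ₘ volume) :
    ∀ᵐ θ ∂μ, ∀ N : ℝ, 0 < N → ∀ᶠ r in 𝓝[>] (0:ℝ), N * r ≤ μ.real (closedBall θ r) := by
  have hrn : volume.rnDeriv μ =ᵐ[μ] 0 := (Measure.rnDeriv_eq_zero _ _).2 hμ.symm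
  filter_upwards [Besicovitch.ae_tendsto_rnDeriv volume μ, hrn] with θ hlim hθ N hN
  rw [hθ, Pi.zero_apply] at hlim
  filter_upwards [hlim.eventually (gt_mem_nhds (ENNReal.ofReal_pos.2 (inv_pos.2 hN))),
    self_mem_nhdsWithin] with r hr (hr0 : 0 < r)
  rw [Real.volume_closedBall] at hr
  have hB : μ (closedBall θ r) ≠ 0 := by
    rintro h
    rw [h, ENNReal.div_zero (by simpa using hr0)] at hr
    exact not_top_lt hr
  rw [ENNReal.div_lt_iff (Or.inl hB) (Or.inl (measure_ne_top _ _)),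
    ← ENNReal.ofReal_toReal (measure_ne_top μ (closedBall θ r)),
    ← ENNReal.ofReal_mul (by positivity), ENNReal.ofReal_lt_ofReal_iff'] at hr
  have h := hr.1
  rw [← measureReal_def, inv_mul_eq_div, lt_div_iff₀ hN] at h
  nlinarith

lemma norm_ofReal_mul_exp_mul_I (a θ : ℝ) : ‖(a : ℂ) * exp (θ * I)‖ = |a| := by
  rw [norm_mul, norm_exp_ofReal_mul_I, mul_one, norm_real, Real.norm_eq_abs]

lemma inv_four_mul_le_re_herglotzKernel {θ θ' r : ℝ} (hr0 : 0 < r) (hr1 : r < 1)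
    (hθ' : θ' ∈ closedBall θ r) :
    1 / (4 * r) ≤ (herglotzKernel (((1 - r : ℝ) : ℂ) * exp (θ * I)) θ').re := by
  set z := ((1 - r : ℝ) : ℂ) * exp (θ * I)
  have hz : ‖z‖ = 1 - r := by rw [norm_ofReal_mul_exp_mul_I, abs_of_pos (by linarith)]
  have hdist : ‖exp (θ' * I) - z‖ ≤ 2 * r := by
    have h1 : exp (θ * I) - z = (r : ℂ) * exp (θ * I) := by simp only [z]; push_cast; ring
    have h2 : ‖exp (θ * I) - z‖ = r := by rw [h1, norm_ofReal_mul_exp_mul_I, abs_of_pos hr0]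
    have h3 := norm_exp_ofReal_mul_I_sub_exp_le θ' θ
    rw [mem_closedBall, Real.dist_eq] at hθ'
    linarith [norm_sub_le_norm_sub_add_norm_sub (exp (θ' * I)) (exp (θ * I)) z]
  have hpos : 0 < ‖exp (θ' * I) - z‖ := by
    linarith [norm_sub_norm_le (exp (θ' * I)) z, norm_exp_ofReal_mul_I θ']
  have hr : r ≤ 1 - (1 - r) ^ 2 := by nlinarith
  rw [re_herglotzKernel, hz]
  calc 1 / (4 * r) = r / (2 * r) ^ 2 := by field_simp; ring
    _ ≤ (1 - (1 - r) ^ 2) / ‖exp (θ' * I) - z‖ ^ 2 := by gcongr; linarith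

lemma norm_singExp_radius_le (hne : (circleSupport μ).Nonempty) {θ r N : ℝ} (hr0 : 0 < r)
    (hr1 : r < 1) (hN : N * r ≤ μ.real (closedBall θ r)) :
    ‖singExp μ (((1 - r : ℝ) : ℂ) * exp (θ * I))‖ ≤ Real.exp (-(N / (8 * π))) := by
  set z := ((1 - r : ℝ) : ℂ) * exp (θ * I)
  have hz : ‖z‖ = 1 - r := by rw [norm_ofReal_mul_exp_mul_I, abs_of_pos (by linarith)]
  have hint : Integrable (herglotzKernel z) μ := integrable_herglotzKernel <|
    (by linarith : 0 < 1 - ‖z‖).trans_le (one_sub_norm_le_infDist circleSupport_subset_sphere hne z)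
  have hlow : N / 4 ≤ ∫ θ', (herglotzKernel z θ').re ∂μ :=
    calc N / 4 = 1 / (4 * r) * (N * r) := by field_simp
      _ ≤ 1 / (4 * r) * μ.real (closedBall θ r) := by gcongr
      _ ≤ ∫ θ' in closedBall θ r, (herglotzKernel z θ').re ∂μ := by
          rw [mul_comm]
          exact setIntegral_ge_of_const_le measurableSet_closedBall (measure_ne_top μ _)
            (fun θ' hθ' => inv_four_mul_le_re_herglotzKernel hr0 hr1 hθ') hint.re.integrableOn
      _ ≤ ∫ θ', (herglotzKernel z θ').re ∂μ :=
          setIntegral_le_integral hint.re (Eventually.of_forall fun θ' =>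
            re_herglotzKernel_nonneg (by rw [hz]; linarith) θ')
  rw [norm_singExp_of_integrable hint]
  calc Real.exp (-(1 / (2 * π)) * ∫ θ', (herglotzKernel z θ').re ∂μ)
      ≤ Real.exp (-(1 / (2 * π)) * (N / 4)) :=
        Real.exp_le_exp.2 (mul_le_mul_of_nonpos_left hlow (by rw [neg_nonpos]; positivity))
    _ = Real.exp (-(N / (8 * π))) := by congr 1; field_simp; ring

/-- Take `θ` near `θ₀` at which `μ` has infinite density, and `z` on the radius ending at
`e^{iθ}`. -/
lemma exists_norm_singExp_lt (hμ : μ ⟂ₘ volume) {θ₀ : ℝ} (hθ₀ : θ₀ ∈ μ.support) {δ ε : ℝ}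
    (hδ : 0 < δ) (hε : 0 < ε) :
    ∃ z ∈ ball (0:ℂ) 1, ‖z - exp (θ₀ * I)‖ < δ ∧ ‖singExp μ z‖ < ε := by
  set N := 8 * π * (|Real.log ε| + 1)
  have hpos : μ (ball θ₀ (δ / 2)) ≠ 0 :=
    ((Measure.mem_support_iff_forall θ₀).1 hθ₀ _ (ball_mem_nhds θ₀ (half_pos hδ))).ne'
  obtain ⟨θ, hθ, hdens⟩ := Measure.exists_mem_of_measure_ne_zero_of_ae hpos
    (ae_restrict_of_ae (ae_eventually_mul_le_measureReal_closedBall hμ))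
  obtain ⟨r, hrN, hr0, hr⟩ := ((hdens N (by positivity)).and
    (Ioo_mem_nhdsGT (by positivity : (0:ℝ) < min (δ / 2) 1))).exists
  have hrδ : r < δ / 2 := hr.trans_le (min_le_left _ _)
  have hr1 : r < 1 := hr.trans_le (min_le_right _ _)
  set z := ((1 - r : ℝ) : ℂ) * exp (θ * I)
  have hz : ‖z‖ = 1 - r := by rw [norm_ofReal_mul_exp_mul_I, abs_of_pos (by linarith)]
  refine ⟨z, by rw [mem_ball_zero_iff, hz]; linarith, ?_, ?_⟩
  · have h1 : ‖z - exp (θ * I)‖ = r := by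
      have : z - exp (θ * I) = ((-r : ℝ) : ℂ) * exp (θ * I) := by simp only [z]; push_cast; ring
      rw [this, norm_ofReal_mul_exp_mul_I, abs_neg, abs_of_pos hr0]
    have h2 := norm_exp_ofReal_mul_I_sub_exp_le θ θ₀
    rw [mem_ball, Real.dist_eq] at hθ
    linarith [norm_sub_le_norm_sub_add_norm_sub z (exp (θ * I)) (exp (θ₀ * I))]
  · calc ‖singExp μ z‖ ≤ Real.exp (-(N / (8 * π))) :=
          norm_singExp_radius_le ⟨_, mem_image_of_mem _ hθ₀⟩ hr0 hr1 hrN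
      _ = Real.exp (-(|Real.log ε| + 1)) := by congr 1; simp only [N]; field_simp
      _ < Real.exp (Real.log ε) := by gcongr; linarith [neg_abs_le (Real.log ε)]
      _ = ε := Real.exp_log hε

lemma circleSupport_subset_innerSpec (hμ : μ ⟂ₘ volume) {S : ℂ → ℂ}
    (hS : ∀ z ∈ ball (0:ℂ) 1, S z = singExp μ z) : circleSupport μ ⊆ innerSpec S := by
  rintro _ ⟨θ₀, hθ₀, rfl⟩
  have hmem : exp (θ₀ * I) ∈ closedBall (0:ℂ) 1 := by simp [norm_exp_ofReal_mul_I]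
  refine ⟨hmem, le_antisymm ?_ ?_⟩
  · refine le_of_forall_pos_le_add fun ε hε => ?_
    rw [zero_add]
    refine liminf_le_of_frequently_le ?_ (isBoundedUnder_of ⟨0, fun z => norm_nonneg _⟩)
    refine (nhdsWithin_basis_ball.frequently_iff).2 fun δ hδ => ?_
    obtain ⟨z, hz, hzδ, hzε⟩ := exists_norm_singExp_lt hμ hθ₀ hδ hε
    exact ⟨z, ⟨by rwa [mem_ball, dist_eq_norm], hz⟩, (hS z hz ▸ hzε).le⟩
  · have : (𝓝[ball (0:ℂ) 1] exp (θ₀ * I)).NeBot := by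
      rwa [← mem_closure_iff_nhdsWithin_neBot, closure_ball 0 one_ne_zero]
    refine le_liminf_of_le (IsBoundedUnder.isCoboundedUnder_ge ⟨1, eventually_map.2 ?_⟩)
      (Eventually.of_forall fun z => norm_nonneg _)
    filter_upwards [self_mem_nhdsWithin] with z hz
    rw [hS z hz]
    exact norm_singExp_le_one μ (mem_ball_zero_iff.1 hz).le

end density

section norms

variable {ω : ModulusOfContinuity} {f : ℂ → ℂ}

lemma norm_le_supNorm (hf : ContinuousOn f (closedBall (0:ℂ) 1)) {z : ℂ}
    (hz : z ∈ closedBall (0:ℂ) 1) : ‖f z‖ ≤ supNorm f :=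
  le_csSup ((isCompact_closedBall 0 1).image_of_continuousOn hf.norm).bddAbove
    (mem_image_of_mem _ hz)

lemma supNorm_nonneg (hf : ContinuousOn f (closedBall (0:ℂ) 1)) : 0 ≤ supNorm f :=
  (norm_nonneg _).trans (norm_le_supNorm hf (mem_closedBall_self zero_le_one))

lemma supNorm_le {B : ℝ} (h : ∀ z ∈ closedBall (0:ℂ) 1, ‖f z‖ ≤ B) : supNorm f ≤ B :=
  csSup_le ((nonempty_closedBall.2 zero_le_one).image _) (by rintro _ ⟨z, hz, rfl⟩; exact h z hz)

lemma le_lipSemi (hf : MemLip ω f) {ξ ζ : ℂ} (hξ : ξ ∈ sphere (0:ℂ) 1)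
    (hζ : ζ ∈ sphere (0:ℂ) 1) (hne : ξ ≠ ζ) : ‖f ξ - f ζ‖ / ω ‖ξ - ζ‖ ≤ lipSemi ω f := by
  obtain ⟨-, -, C, hC⟩ := hf
  refine le_csSup ⟨C, ?_⟩ ⟨(ξ, ζ), ⟨hξ, hζ, hne⟩, rfl⟩
  rintro _ ⟨⟨a, b⟩, ⟨ha, hb, hab⟩, rfl⟩
  exact (div_le_iff₀ (ω.pos_of_mem_sphere ha hb hab)).2 (hC a ha b hb hab)

lemma norm_sub_le_lipSemi_mul (hf : MemLip ω f) {ξ ζ : ℂ} (hξ : ξ ∈ sphere (0:ℂ) 1)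
    (hζ : ζ ∈ sphere (0:ℂ) 1) (hne : ξ ≠ ζ) : ‖f ξ - f ζ‖ ≤ lipSemi ω f * ω ‖ξ - ζ‖ :=
  (div_le_iff₀ (ω.pos_of_mem_sphere hξ hζ hne)).1 (le_lipSemi hf hξ hζ hne)

lemma lipSemi_nonneg (hf : MemLip ω f) : 0 ≤ lipSemi ω f :=
  (div_nonneg (norm_nonneg _) (ω.pos_of_mem_sphere (ξ := 1) (ζ := -1) (by simp) (by simp)
    (by norm_num)).le).trans (le_lipSemi hf (by simp) (by simp) (by norm_num))

lemma lipNorm_nonneg (hf : MemLip ω f) : 0 ≤ lipNorm ω f :=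
  add_nonneg (supNorm_nonneg hf.1) (lipSemi_nonneg hf)

lemma lipSemi_le {B : ℝ} (h : ∀ ξ ∈ sphere (0:ℂ) 1, ∀ ζ ∈ sphere (0:ℂ) 1, ξ ≠ ζ →
    ‖f ξ - f ζ‖ ≤ B * ω ‖ξ - ζ‖) : lipSemi ω f ≤ B := by
  refine csSup_le ⟨_, ⟨((1:ℂ), (-1:ℂ)), ⟨by simp, by simp, by norm_num⟩, rfl⟩⟩ ?_
  rintro _ ⟨⟨ξ, ζ⟩, ⟨hξ, hζ, hne⟩, rfl⟩
  exact (div_le_iff₀ (ω.pos_of_mem_sphere hξ hζ hne)).2 (h ξ hξ ζ hζ hne)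

lemma norm_le_mul_omega_infDist {Z : Set ℂ} (hZ : IsCompact Z) (hZne : Z.Nonempty)
    (hfZ : ∀ e ∈ Z, f e = 0) {L : ℝ} {x : ℂ}
    (h : ∀ e ∈ Z, x ≠ e → ‖f x - f e‖ ≤ L * ω ‖x - e‖) : ‖f x‖ ≤ L * ω (infDist x Z) := by
  obtain ⟨e, he, hdist⟩ := hZ.exists_infDist_eq_dist hZne x
  rcases eq_or_ne x e with rfl | hxe
  · rw [hfZ x he, norm_zero, infDist_zero_of_mem he, ω.zero, mul_zero]
  · simpa [hfZ e he, hdist, dist_eq_norm] using h e he hxe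

lemma norm_le_lipSemi_mul_infDist {Z : Set ℂ} (hZ : IsCompact Z) (hZne : Z.Nonempty)
    (hZs : Z ⊆ sphere (0:ℂ) 1) (hf : MemLip ω f) (hfZ : ∀ e ∈ Z, f e = 0) {x : ℂ}
    (hx : x ∈ sphere (0:ℂ) 1) : ‖f x‖ ≤ lipSemi ω f * ω (infDist x Z) :=
  norm_le_mul_omega_infDist hZ hZne hfZ fun _ he hxe =>
    norm_sub_le_lipSemi_mul hf hx (hZs he) hxe

end norms

/-- The two properties of a singular inner function with measure carried by `K` that the
multiplier estimates use. -/
structure IsBoundaryWeight (K : Set ℂ) (m : ℝ) (u : ℂ → ℂ) : Prop where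
  norm_le_one : ∀ z ∈ closedBall (0:ℂ) 1, ‖u z‖ ≤ 1
  norm_sub_le_div : ∀ ξ ∈ sphere (0:ℂ) 1, ∀ ζ ∈ sphere (0:ℂ) 1,
    0 < infDist ξ K → 0 < infDist ζ K → ‖u ξ - u ζ‖ ≤ m * ‖ξ - ζ‖ / (infDist ξ K * infDist ζ K)

namespace IsBoundaryWeight

variable {ω : ModulusOfContinuity} {η : ℝ} {K : Set ℂ} {m : ℝ} {u f : ℂ → ℂ}

lemma norm_mul_le (hu : IsBoundaryWeight K m u) {z : ℂ} (hz : z ∈ closedBall (0:ℂ) 1) :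
    ‖u z * f z‖ ≤ ‖f z‖ := by
  rw [norm_mul]
  exact mul_le_of_le_one_left (norm_nonneg _) (hu.norm_le_one z hz)

lemma norm_mul_sub_mul_le_add (hu : IsBoundaryWeight K m u) {ξ ζ : ℂ}
    (hξ : ξ ∈ closedBall (0:ℂ) 1) (hζ : ζ ∈ closedBall (0:ℂ) 1) :
    ‖u ξ * f ξ - u ζ * f ζ‖ ≤ ‖f ξ‖ + ‖f ζ‖ :=
  (norm_sub_le _ _).trans (add_le_add (hu.norm_mul_le hξ) (hu.norm_mul_le hζ))

lemma norm_mul_sub_mul_le_of_infDist_le (hu : IsBoundaryWeight K m u)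
    (hK : K ⊆ sphere (0:ℂ) 1) (hm : 0 ≤ m) (hη : 0 < η)
    (hηω : ∀ s ∈ Ioc (0:ℝ) 1, η * ω s ≤ ω (s ^ 2)) {L : ℝ} {ξ ζ : ℂ}
    (hξ : ξ ∈ sphere (0:ℂ) 1) (hζ : ζ ∈ sphere (0:ℂ) 1) (hne : ξ ≠ ζ) (ht : ‖ξ - ζ‖ < 1 / 4)
    (hpair : ‖f ξ - f ζ‖ ≤ L * ω ‖ξ - ζ‖) (hfζ : ‖f ζ‖ ≤ L * ω (infDist ζ K))
    (hord : infDist ζ K ≤ infDist ξ K) :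
    ‖u ξ * f ξ - u ζ * f ζ‖ ≤ (1 + 4 / η + m / (2 * η)) * (L * ω ‖ξ - ζ‖) := by
  set t := ‖ξ - ζ‖
  have ht0 : 0 < t := norm_pos_iff.2 (sub_ne_zero.2 hne)
  have hωt := ω.pos_of_mem_sphere hξ hζ hne
  have hL : 0 ≤ L := nonneg_of_mul_nonneg_left ((norm_nonneg _).trans hpair) hωt
  have hc : 1 ≤ 1 + 4 / η + m / (2 * η) := by
    have : 0 ≤ 4 / η + m / (2 * η) := by positivity
    linarith
  rcases (infDist_nonneg : 0 ≤ infDist ζ K).eq_or_lt with hdζ | hdζ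
  · have hfζ0 : f ζ = 0 := by
      rw [← hdζ, ω.zero, mul_zero] at hfζ
      exact norm_le_zero_iff.1 hfζ
    calc ‖u ξ * f ξ - u ζ * f ζ‖ ≤ ‖f ξ - f ζ‖ := by
          simpa [hfζ0] using hu.norm_mul_le (f := f) (sphere_subset_closedBall hξ)
      _ ≤ L * ω t := hpair
      _ ≤ (1 + 4 / η + m / (2 * η)) * (L * ω t) := le_mul_of_one_le_left (by positivity) hc
  have hdξ := hdζ.trans_le hord
  have hΔu : ‖u ξ - u ζ‖ ≤ 2 := (norm_sub_le _ _).trans (by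
    linarith [hu.norm_le_one ξ (sphere_subset_closedBall hξ),
      hu.norm_le_one ζ (sphere_subset_closedBall hζ)])
  have hsecond : ω (infDist ζ K) * ‖u ξ - u ζ‖ ≤ (4 / η + m / (2 * η)) * ω t :=
    ModulusOfContinuity.mul_le_of_le_min hη hηω ht0 ht hdζ hord
      (infDist_le_two_of_subset_sphere hK hζ) hm hΔu
      (by rw [mul_comm (infDist ζ K)]; exact hu.norm_sub_le_div ξ hξ ζ hζ hdξ hdζ)
  calc ‖u ξ * f ξ - u ζ * f ζ‖ = ‖u ξ * (f ξ - f ζ) + f ζ * (u ξ - u ζ)‖ := by ring_nf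
    _ ≤ ‖f ξ - f ζ‖ + ‖f ζ‖ * ‖u ξ - u ζ‖ := by
        refine (norm_add_le _ _).trans ?_
        rw [norm_mul, norm_mul]
        gcongr
        exact mul_le_of_le_one_left (norm_nonneg _)
          (hu.norm_le_one ξ (sphere_subset_closedBall hξ))
    _ ≤ L * ω t + L * ω (infDist ζ K) * ‖u ξ - u ζ‖ := by gcongr
    _ ≤ L * ω t + L * ((4 / η + m / (2 * η)) * ω t) := by
        rw [mul_assoc]; gcongr
    _ = (1 + 4 / η + m / (2 * η)) * (L * ω t) := by ring

lemma norm_mul_sub_mul_le (hu : IsBoundaryWeight K m u)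
    (hK : K ⊆ sphere (0:ℂ) 1) (hm : 0 ≤ m) (hη : 0 < η)
    (hηω : ∀ s ∈ Ioc (0:ℝ) 1, η * ω s ≤ ω (s ^ 2)) {L : ℝ} {ξ ζ : ℂ}
    (hξ : ξ ∈ sphere (0:ℂ) 1) (hζ : ζ ∈ sphere (0:ℂ) 1) (hne : ξ ≠ ζ) (ht : ‖ξ - ζ‖ < 1 / 4)
    (hpair : ‖f ξ - f ζ‖ ≤ L * ω ‖ξ - ζ‖) (hfξ : ‖f ξ‖ ≤ L * ω (infDist ξ K))
    (hfζ : ‖f ζ‖ ≤ L * ω (infDist ζ K)) :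
    ‖u ξ * f ξ - u ζ * f ζ‖ ≤ (1 + 4 / η + m / (2 * η)) * (L * ω ‖ξ - ζ‖) := by
  rcases le_total (infDist ζ K) (infDist ξ K) with hord | hord
  · exact hu.norm_mul_sub_mul_le_of_infDist_le hK hm hη hηω hξ hζ hne ht hpair hfζ hord
  · have h := hu.norm_mul_sub_mul_le_of_infDist_le hK hm hη hηω hζ hξ hne.symm
      (by rwa [norm_sub_rev]) (by rwa [norm_sub_rev, norm_sub_rev ζ]) hfξ hord
    rwa [norm_sub_rev, norm_sub_rev ζ] at h

lemma norm_mul_sub_mul_le_lipNorm (hu : IsBoundaryWeight K m u) (hK : K ⊆ sphere (0:ℂ) 1)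
    (hKc : IsCompact K) (hKne : K.Nonempty) (hm : 0 ≤ m) (hη : 0 < η)
    (hηω : ∀ s ∈ Ioc (0:ℝ) 1, η * ω s ≤ ω (s ^ 2)) (hf : MemLip ω f)
    (hfK : ∀ z ∈ K, f z = 0) {ξ ζ : ℂ} (hξ : ξ ∈ sphere (0:ℂ) 1) (hζ : ζ ∈ sphere (0:ℂ) 1)
    (hne : ξ ≠ ζ) :
    ‖u ξ * f ξ - u ζ * f ζ‖ ≤
      (2 / ω (1 / 4) + (1 + 4 / η + m / (2 * η))) * lipNorm ω f * ω ‖ξ - ζ‖ := by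
  set A := supNorm f
  set L := lipSemi ω f
  have hA : 0 ≤ A := supNorm_nonneg hf.1
  have hL : 0 ≤ L := lipSemi_nonneg hf
  have hω4 : 0 < ω (1 / 4) := ω.pos (by norm_num) (by norm_num)
  have hωt := ω.pos_of_mem_sphere hξ hζ hne
  have hpoint : ∀ x ∈ sphere (0:ℂ) 1, ‖f x‖ ≤ L * ω (infDist x K) := fun x hx =>
    norm_le_lipSemi_mul_infDist hKc hKne hK hf hfK hx
  rcases lt_or_ge ‖ξ - ζ‖ (1 / 4) with ht | ht
  · calc ‖u ξ * f ξ - u ζ * f ζ‖ ≤ (1 + 4 / η + m / (2 * η)) * (L * ω ‖ξ - ζ‖) :=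
          hu.norm_mul_sub_mul_le hK hm hη hηω hξ hζ hne ht
            (norm_sub_le_lipSemi_mul hf hξ hζ hne) (hpoint ξ hξ) (hpoint ζ hζ)
      _ ≤ (1 + 4 / η + m / (2 * η)) * ((A + L) * ω ‖ξ - ζ‖) := by gcongr; linarith
      _ ≤ (2 / ω (1 / 4) + (1 + 4 / η + m / (2 * η))) * (A + L) * ω ‖ξ - ζ‖ := by
          rw [mul_assoc]
          exact mul_le_mul_of_nonneg_right (le_add_of_nonneg_left (by positivity))
            (by positivity)
  · calc ‖u ξ * f ξ - u ζ * f ζ‖ ≤ ‖f ξ‖ + ‖f ζ‖ :=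
          hu.norm_mul_sub_mul_le_add (sphere_subset_closedBall hξ) (sphere_subset_closedBall hζ)
      _ ≤ A + A := add_le_add (norm_le_supNorm hf.1 (sphere_subset_closedBall hξ))
          (norm_le_supNorm hf.1 (sphere_subset_closedBall hζ))
      _ = 2 / ω (1 / 4) * A * ω (1 / 4) := by field_simp; ring
      _ ≤ 2 / ω (1 / 4) * A * ω ‖ξ - ζ‖ := by
          gcongr
          exact ω.mono ⟨by norm_num, by norm_num⟩
            ⟨by linarith, norm_sub_le_two_of_mem_sphere hξ hζ⟩ ht
      _ ≤ (2 / ω (1 / 4) + (1 + 4 / η + m / (2 * η))) * (A + L) * ω ‖ξ - ζ‖ := by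
          gcongr
          · have : 0 ≤ 1 + 4 / η + m / (2 * η) := by positivity
            linarith
          · linarith

lemma lipNorm_mul_le (hu : IsBoundaryWeight K m u) (hK : K ⊆ sphere (0:ℂ) 1)
    (hKc : IsCompact K) (hKne : K.Nonempty) (hm : 0 ≤ m) (hη : 0 < η)
    (hηω : ∀ s ∈ Ioc (0:ℝ) 1, η * ω s ≤ ω (s ^ 2)) (hf : MemLip ω f)
    (hfK : ∀ z ∈ K, f z = 0) :
    lipNorm ω (fun z => u z * f z) ≤
      (1 + (2 / ω (1 / 4) + (1 + 4 / η + m / (2 * η)))) * lipNorm ω f := by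
  have hsup : supNorm (fun z => u z * f z) ≤ supNorm f :=
    supNorm_le fun z hz => (hu.norm_mul_le hz).trans (norm_le_supNorm hf.1 hz)
  have hlip := lipSemi_le (ω := ω) (f := fun z => u z * f z) fun ξ hξ ζ hζ hne =>
    hu.norm_mul_sub_mul_le_lipNorm hK hKc hKne hm hη hηω hf hfK hξ hζ hne
  have hsupf : supNorm f ≤ lipNorm ω f := le_add_of_nonneg_right (lipSemi_nonneg hf)
  rw [lipNorm, add_mul, one_mul]
  linarith

lemma jCond_mul (hu : IsBoundaryWeight K m u) {E : Set ℂ} (hEc : IsCompact E)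
    (hE : E ⊆ sphere (0:ℂ) 1) (hKc : IsCompact K) (hKne : K.Nonempty) (hKE : K ⊆ E)
    (hm : 0 ≤ m) (hη : 0 < η) (hηω : ∀ s ∈ Ioc (0:ℝ) 1, η * ω s ≤ ω (s ^ 2))
    (hf : MemLip ω f) (hfE : ∀ z ∈ E, f z = 0) (hJ : JCond ω E f) :
    JCond ω E (fun z => u z * f z) := by
  intro ε hε
  set c := 1 + 4 / η + m / (2 * η)
  have hc : 0 < c := by positivity
  set L := lipSemi ω f
  have hL : 0 ≤ L := lipSemi_nonneg hf
  have hω4 : 0 < ω (1 / 4) := ω.pos (by norm_num) (by norm_num)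
  obtain ⟨δ₁, hδ₁, hJδ₁⟩ := hJ (ε / c) (by positivity)
  obtain ⟨δ₂, hωδ₂, hδ₂⟩ := ((ω.tendsto_nhdsGT_zero.eventually (gt_mem_nhds
    (by positivity : 0 < ε * ω (1 / 4) / (2 * (L + 1))))).and (Ioo_mem_nhdsGT two_pos)).exists
  refine ⟨min δ₁ δ₂, lt_min hδ₁ hδ₂.1, fun ξ hξ ζ hζ hne => ?_⟩
  have hsub : ∀ x ∈ ENbhd E (min δ₁ δ₂), x ∈ ENbhd E δ₁ := fun x hx =>
    ⟨hx.1, hx.2.trans (min_le_left _ _)⟩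
  rcases lt_or_ge ‖ξ - ζ‖ (1 / 4) with ht | ht
  · have hpoint : ∀ x ∈ ENbhd E (min δ₁ δ₂), ‖f x‖ ≤ ε / c * ω (infDist x K) := fun x hx =>
      norm_le_mul_omega_infDist hKc hKne (fun z hz => hfE z (hKE hz)) fun e he hxe =>
        hJδ₁ x (hsub x hx) e ⟨hE (hKE he), by rw [infDist_zero_of_mem (hKE he)]; exact hδ₁.le⟩ hxe
    calc ‖u ξ * f ξ - u ζ * f ζ‖ ≤ c * (ε / c * ω ‖ξ - ζ‖) :=
          hu.norm_mul_sub_mul_le (hKE.trans hE) hm hη hηω hξ.1 hζ.1 hne ht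
            (hJδ₁ ξ (hsub ξ hξ) ζ (hsub ζ hζ) hne) (hpoint ξ hξ) (hpoint ζ hζ)
      _ = ε * ω ‖ξ - ζ‖ := by field_simp
  · have hpoint : ∀ x ∈ ENbhd E (min δ₁ δ₂), ‖f x‖ ≤ L * ω δ₂ := fun x hx => by
      have hxδ : infDist x E ≤ δ₂ := hx.2.trans (min_le_right _ _)
      refine (norm_le_lipSemi_mul_infDist hEc (hKne.mono hKE) hE hf hfE hx.1).trans ?_
      gcongr
      exact ω.mono ⟨infDist_nonneg, by linarith [hδ₂.2]⟩ ⟨hδ₂.1.le, hδ₂.2.le⟩ hxδ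
    have hωδ₂0 : 0 ≤ ω δ₂ := ω.nonneg _ ⟨hδ₂.1.le, hδ₂.2.le⟩
    rw [lt_div_iff₀ (by positivity)] at hωδ₂
    calc ‖u ξ * f ξ - u ζ * f ζ‖ ≤ ‖f ξ‖ + ‖f ζ‖ :=
          hu.norm_mul_sub_mul_le_add (sphere_subset_closedBall hξ.1)
            (sphere_subset_closedBall hζ.1)
      _ ≤ ε * ω (1 / 4) := by nlinarith [hpoint ξ hξ, hpoint ζ hζ]
      _ ≤ ε * ω ‖ξ - ζ‖ := by
          gcongr
          exact ω.mono ⟨by norm_num, by norm_num⟩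
            ⟨by linarith, norm_sub_le_two_of_mem_sphere hξ.1 hζ.1⟩ ht

end IsBoundaryWeight

section singExp

variable {μ : Measure ℝ} [IsFiniteMeasure μ]

lemma isBoundaryWeight_singExp {M : ℝ} (hM : μ.real univ ≤ M) :
    IsBoundaryWeight (circleSupport μ) (M / π) (singExp μ) where
  norm_le_one _ hz := norm_singExp_le_one μ (mem_closedBall_zero_iff.1 hz)
  norm_sub_le_div ξ hξ ζ hζ hdξ hdζ := by
    refine (norm_singExp_sub_le (mem_sphere_zero_iff_norm.1 hξ).le
      (mem_sphere_zero_iff_norm.1 hζ).le hdξ hdζ).trans ?_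
    gcongr

lemma differentiableOn_singExp (hne : (circleSupport μ).Nonempty) :
    DifferentiableOn ℂ (singExp μ) (ball (0:ℂ) 1) := fun z hz =>
  (differentiableAt_singExp ((sub_pos.2 (mem_ball_zero_iff.1 hz)).trans_le
    (one_sub_norm_le_infDist circleSupport_subset_sphere hne z))).differentiableWithinAt

lemma continuousOn_singExp_mul (hμ : μ (Ico 0 (2 * π))ᶜ = 0)
    (hne : (circleSupport μ).Nonempty) {f : ℂ → ℂ} (hf : ContinuousOn f (closedBall (0:ℂ) 1))
    (hfK : ∀ z ∈ circleSupport μ, f z = 0) :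
    ContinuousOn (fun z => singExp μ z * f z) (closedBall (0:ℂ) 1) := by
  intro z₀ hz₀
  by_cases hK : z₀ ∈ circleSupport μ
  · have hf0 : Tendsto (fun z => ‖f z‖) (𝓝[closedBall (0:ℂ) 1] z₀) (𝓝 0) := by
      simpa [ContinuousWithinAt, hfK z₀ hK] using (hf z₀ hz₀).norm
    rw [ContinuousWithinAt, hfK z₀ hK, mul_zero]
    refine squeeze_zero_norm' ?_ hf0
    filter_upwards [self_mem_nhdsWithin] with z hz
    rw [norm_mul]
    exact mul_le_of_le_one_left (norm_nonneg _)
      (norm_singExp_le_one μ (mem_closedBall_zero_iff.1 hz))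
  · have hd := ((isCompact_circleSupport hμ).isClosed.notMem_iff_infDist_pos hne).1 hK
    exact (differentiableAt_singExp hd).continuousAt.continuousWithinAt.mul (hf z₀ hz₀)

end singExp

/-- **Lemma (multi).** Multiplication by a singular inner function `S` with `σ(S) ⊆ E ⊆ E_f`
and mass at most `M` maps `Lip_ω` into itself with norm control depending only on `ω, M`,
and preserves `J_ω(E)`. -/
theorem singular_multiplier
    (ω : ModulusOfContinuity) (hω : EtaPos ω)
    (M : ℝ) (hM : 0 < M) :
    ∃ c > (0:ℝ), ∀ f : ℂ → ℂ, MemLip ω f →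
      ∀ E : Set ℂ, IsClosed E → E ⊆ bdryZeroSet f →
      ∀ S : ℂ → ℂ, ∀ μ : Measure ℝ, IsSingularInnerWith S μ →
        innerSpec S ⊆ E → μ Set.univ ≤ ENNReal.ofReal M →
      ∃ F : ℂ → ℂ,
        (∀ z ∈ ball (0:ℂ) 1, F z = S z * f z) ∧
        MemLip ω F ∧ lipNorm ω F ≤ c * lipNorm ω f ∧
        (MemJ ω E f → MemJ ω E F) := by
  obtain ⟨η, hη, hηω⟩ := hω
  have hω4 : 0 < ω (1 / 4) := ω.pos (by norm_num) (by norm_num)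
  refine ⟨1 + (2 / ω (1 / 4) + (1 + 4 / η + M / π / (2 * η))), by positivity, ?_⟩
  intro f hf E hE hEf S μ ⟨hμfin, hμIco, hμsing, hSμ⟩ hσ hμM
  have : IsFiniteMeasure μ := ⟨hμfin⟩
  rcases eq_or_ne μ 0 with rfl | hμ0
  · exact ⟨f, fun z hz => by simp [hSμ z hz], hf,
      le_mul_of_one_le_left (lipNorm_nonneg hf) (le_add_of_nonneg_right (by positivity)), id⟩
  have hKne : (circleSupport μ).Nonempty := (Measure.nonempty_support hμ0).image _
  have hKc := isCompact_circleSupport hμIco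
  have hKE : circleSupport μ ⊆ E := (circleSupport_subset_innerSpec hμsing hSμ).trans hσ
  have hEs : E ⊆ sphere (0:ℂ) 1 := fun z hz => (hEf hz).1
  have hfE : ∀ z ∈ E, f z = 0 := fun z hz => (hEf hz).2
  have hfK : ∀ z ∈ circleSupport μ, f z = 0 := fun z hz => hfE z (hKE hz)
  have hu := isBoundaryWeight_singExp (μ := μ) (ENNReal.toReal_le_of_le_ofReal hM.le hμM)
  have hm : 0 ≤ M / π := by positivity
  have hF : MemLip ω (fun z => singExp μ z * f z) :=
    ⟨continuousOn_singExp_mul hμIco hKne hf.1 hfK, (differentiableOn_singExp hKne).mul hf.2.1,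
      _, fun ξ hξ ζ hζ hne => hu.norm_mul_sub_mul_le_lipNorm (hKE.trans hEs) hKc hKne hm hη hηω
        hf hfK hξ hζ hne⟩
  refine ⟨_, fun z hz => by rw [hSμ z hz]; rfl, hF,
    hu.lipNorm_mul_le (hKE.trans hEs) hKc hKne hm hη hηω hf hfK, fun hJ => ⟨⟨hF, ?_⟩, ?_⟩⟩
  · exact fun z hz => by simp [hfE z hz]
  · exact hu.jCond_mul ((isCompact_sphere 0 1).of_isClosed_subset hE hEs) hEs hKc hKne hKE hm
      hη hηω hf hfE hJ.2
end
end

section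
/- Let ω be an arbitrary modulus of continuity and E ⊆ 𝕋 closed of Lebesgue measure zero. Then J_ω(E) = K_ω(E), where K_ω(E) = {f ∈ I_ω(E) : lim_{δ→0} sup{ |f(z)−f(w)|/ω(|z−w|) : z,w ∈ 𝔻, z≠w, d(z,E) ≤ δ, d(w,E) ≤ δ } = 0}. -/
/-!
`K_ω(E) ⊆ J_ω(E)`: for `ξ, ζ ∈ E(δ)` apply the `K`-estimate to `rξ, rζ` and let `r → 1⁻`.

`J_ω(E) ⊆ K_ω(E)`: let `f` be `C`-Lipschitz on `𝕋` and `η`-flat on `E(δ)`. At a point `ζ ∈ 𝕋`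
near `E`, the maximum principle applied to `(f - f ζ) / Φ`, for an explicit weight `Φ` comparable
to `ω` near `ζ` and to `(C / η) ω` away from `ζ`, shows that `f` is `4 √(η C)`-flat in the disk
near `ζ`. For `z, w` near `E`, either `|z - w| < 1 - |z|` and the Schwarz lemma on the disk of
radius `1 - |z|` about `z` gives the estimate, or `z` and `w` are both within `|z - w|` of their
radial projections to `𝕋`, and the estimate passes through those.
-/

open Complex Metric Set MeasureTheory Filter

noncomputable section

/-- `K_ω(E)` membership: the uniform smallness condition over pairs of points of the open
disk near `E`. -/
def MemK (ω : ModulusOfContinuity) (E : Set ℂ) (f : ℂ → ℂ) : Prop :=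
  MemI ω E f ∧
  ∀ ε > (0:ℝ), ∃ δ > (0:ℝ), ∀ z ∈ ball (0:ℂ) 1, ∀ w ∈ ball (0:ℂ) 1, z ≠ w →
    Metric.infDist z E ≤ δ → Metric.infDist w E ≤ δ →
    ‖f z - f w‖ ≤ ε * ω (‖z - w‖)

open ComplexConjugate Topology

namespace ModulusOfContinuity

variable (ω : ModulusOfContinuity)

lemma apply_nonneg {t : ℝ} (h0 : 0 ≤ t) (h2 : t ≤ 2) : 0 ≤ ω t := ω.nonneg t ⟨h0, h2⟩

lemma apply_le_apply {s t : ℝ} (hs : 0 ≤ s) (hst : s ≤ t) (ht : t ≤ 2) : ω s ≤ ω t :=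
  ω.mono ⟨hs, hst.trans ht⟩ ⟨hs.trans hst, ht⟩ hst

lemma mul_apply_le_mul_apply {s t : ℝ} (hs : 0 ≤ s) (hst : s ≤ t) (ht : t ≤ 2) :
    s * ω t ≤ t * ω s := by
  rcases hs.eq_or_lt with rfl | hs
  · simp [ω.zero]
  have h := ω.quot_anti ⟨hs, hst.trans ht⟩ ⟨hs.trans_le hst, ht⟩ hst
  rwa [div_le_div_iff₀ (hs.trans_le hst) hs, mul_comm, mul_comm (ω s)] at h

lemma apply_le_mul_apply {l s t : ℝ} (hl : 1 ≤ l) (hs : 0 ≤ s) (hs2 : s ≤ 2) (ht : 0 < t)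
    (ht2 : t ≤ 2) (hst : s ≤ l * t) : ω s ≤ l * ω t := by
  have hωt := ω.apply_nonneg ht.le ht2
  rcases le_or_gt s t with h | h
  · nlinarith [ω.apply_le_apply hs h ht2]
  · nlinarith [ω.mul_apply_le_mul_apply ht.le h.le hs2]

lemma apply_le_div_mul_add {t s : ℝ} (ht : 0 < t) (ht2 : t ≤ 2) (hs : 0 ≤ s) (hs2 : s ≤ 2) :
    ω s ≤ ω t / t * (t + s) := by
  rw [div_mul_eq_mul_div, le_div_iff₀ ht]
  have hωt := ω.apply_nonneg ht.le ht2
  rcases le_or_gt s t with h | h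
  · nlinarith [ω.apply_le_apply hs h ht2]
  · nlinarith [ω.mul_apply_le_mul_apply ht.le h.le hs2]

end ModulusOfContinuity

namespace Complex

lemma add_norm_le_two_mul_norm_ofReal_add {a : ℝ} {w : ℂ} (ha : 0 ≤ a) (hw : 0 ≤ w.re) :
    a + ‖w‖ ≤ 2 * ‖(a : ℂ) + w‖ := by
  have h₁ : a ≤ ‖(a : ℂ) + w‖ := by
    simpa using (le_add_of_nonneg_right hw).trans (re_le_norm ((a : ℂ) + w))
  have h₂ : ‖w‖ ≤ ‖(a : ℂ) + w‖ := by
    rw [norm_def, norm_def]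
    gcongr
    simp only [normSq_apply, add_re, add_im, ofReal_re, ofReal_im, zero_add]
    nlinarith
  linarith

variable {w : ℂ} {ρ : ℝ}

lemma add_ofReal_ne_zero (hw : 0 ≤ w.re) (hρ : 0 < ρ) : w + ρ ≠ 0 := fun h => by
  have := congrArg re h
  simp only [add_re, ofReal_re, zero_re] at this
  linarith

lemma re_div_add_ofReal :
    (w / (w + ρ)).re = (normSq w + ρ * w.re) / normSq (w + ρ) := by
  rw [div_re, normSq_apply w]
  simp only [add_re, add_im, ofReal_re, ofReal_im, add_zero]
  ring

lemma re_div_add_ofReal_nonneg (hw : 0 ≤ w.re) (hρ : 0 < ρ) : 0 ≤ (w / (w + ρ)).re := by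
  rw [re_div_add_ofReal]
  have := normSq_nonneg w
  have := normSq_nonneg (w + ρ)
  positivity

lemma half_le_re_div_add_ofReal (hw : 0 ≤ w.re) (hρ : 0 < ρ) (hρw : ρ ≤ ‖w‖) :
    1 / 2 ≤ (w / (w + ρ)).re := by
  rw [re_div_add_ofReal, le_div_iff₀ (normSq_pos.mpr (add_ofReal_ne_zero hw hρ))]
  have hsq : ρ ^ 2 ≤ normSq w := by rw [← Complex.sq_norm]; gcongr
  have hN : normSq (w + ρ) = normSq w + 2 * ρ * w.re + ρ ^ 2 := by
    simp only [normSq_apply, add_re, add_im, ofReal_re, ofReal_im, add_zero]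
    ring
  rw [hN]
  linarith

lemma re_div_add_ofReal_le (hw : 0 ≤ w.re) (hρ : 0 < ρ) : (w / (w + ρ)).re ≤ ‖w‖ / ρ := by
  have hρle : ρ ≤ ‖w + ρ‖ := by
    simpa using (le_add_of_nonneg_left hw).trans (re_le_norm (w + ρ))
  calc (w / (w + ρ)).re ≤ ‖w / (w + ρ)‖ := re_le_norm _
    _ = ‖w‖ / ‖w + ρ‖ := norm_div _ _
    _ ≤ ‖w‖ / ρ := div_le_div_of_nonneg_left (norm_nonneg _) hρ hρle

end Complex

lemma norm_sub_le_two {x y : ℂ} (hx : ‖x‖ ≤ 1) (hy : ‖y‖ ≤ 1) : ‖x - y‖ ≤ 2 := by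
  linarith [norm_sub_le x y]

lemma exists_norm_eq_one_norm_sub_eq {z : ℂ} (hz : ‖z‖ ≤ 1) :
    ∃ ξ : ℂ, ‖ξ‖ = 1 ∧ ‖z - ξ‖ = 1 - ‖z‖ := by
  rcases eq_or_ne z 0 with rfl | h0
  · exact ⟨1, by simp, by simp⟩
  have hr : 0 < ‖z‖ := norm_pos_iff.mpr h0
  refine ⟨(‖z‖⁻¹ : ℝ) • z, by simp [hr.ne'], ?_⟩
  rw [show z - (‖z‖⁻¹ : ℝ) • z = (1 - ‖z‖⁻¹ : ℝ) • z by rw [sub_smul, one_smul], norm_smul,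
    Real.norm_of_nonpos (by linarith [(one_le_inv₀ hr).mpr hz])]
  field_simp
  ring

lemma infDist_le_mul_infDist {E : Set ℂ} (hE : E ⊆ sphere (0 : ℂ) 1) {z y : ℂ} {k : ℝ}
    (hk : 0 ≤ k) (hyz : ‖y - z‖ ≤ k * (1 - ‖z‖)) :
    infDist y E ≤ (k + 1) * infDist z E := by
  rcases E.eq_empty_or_nonempty with rfl | hne
  · simp
  have hz : 1 - ‖z‖ ≤ infDist z E := (le_infDist hne).mpr fun e he => by
    have he1 : ‖e‖ = 1 := by simpa using hE he
    rw [dist_comm, dist_eq_norm]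
    linarith [norm_sub_norm_le e z]
  calc infDist y E ≤ infDist z E + dist y z := infDist_le_infDist_add_dist
    _ ≤ (k + 1) * infDist z E := by rw [dist_eq_norm]; nlinarith

lemma infDist_smul_le {E : Set ℂ} {x : ℂ} (hx : ‖x‖ = 1) {r : ℝ} (hr : r ≤ 1) :
    infDist (r • x) E ≤ infDist x E + (1 - r) := by
  have : dist (r • x) x = 1 - r := by
    rw [dist_eq_norm, show r • x - x = (r - 1) • x by rw [sub_smul, one_smul], norm_smul, hx,
      mul_one, Real.norm_of_nonpos (by linarith)]
    ring
  exact this ▸ infDist_le_infDist_add_dist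

lemma tendsto_apply_smul_nhdsLT_one {f : ℂ → ℂ} (hf : ContinuousOn f (closedBall (0 : ℂ) 1))
    {x : ℂ} (hx : ‖x‖ ≤ 1) :
    Tendsto (fun r : ℝ => f (r • x)) (𝓝[<] 1) (𝓝 (f x)) := by
  have hsmul : Tendsto (fun r : ℝ => r • x) (𝓝[<] 1) (𝓝[closedBall (0 : ℂ) 1] x) := by
    refine tendsto_nhdsWithin_iff.mpr ⟨?_, ?_⟩
    · exact ((continuous_id.smul continuous_const).tendsto' (1 : ℝ) x (one_smul ℝ x)).mono_left
        nhdsWithin_le_nhds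
    · filter_upwards [Ioo_mem_nhdsLT (show (0 : ℝ) < 1 by norm_num)] with r hr
      rw [mem_closedBall_zero_iff, norm_smul, Real.norm_of_nonneg hr.1.le]
      nlinarith [hr.2, norm_nonneg x]
  exact (hf x (mem_closedBall_zero_iff.mpr hx)).tendsto.comp hsmul

lemma norm_le_mul_norm_of_forall_mem_frontier {f Φ : ℂ → ℂ} {U : Set ℂ} (hU : Bornology.IsBounded U)
    (hf : DiffContOnCl ℂ f U) (hΦ : DiffContOnCl ℂ Φ U) (hΦ0 : ∀ z ∈ closure U, Φ z ≠ 0)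
    {M : ℝ} (hM : ∀ z ∈ frontier U, ‖f z‖ ≤ M * ‖Φ z‖) {z : ℂ} (hz : z ∈ closure U) :
    ‖f z‖ ≤ M * ‖Φ z‖ := by
  have hq : DiffContOnCl ℂ (fun v => f v / Φ v) U :=
    ⟨hf.1.div hΦ.1 fun v hv => hΦ0 v (subset_closure hv), hf.2.div hΦ.2 hΦ0⟩
  have key := Complex.norm_le_of_forall_mem_frontier_norm_le hU hq (C := M) (fun v hv => by
    rw [norm_div, div_le_iff₀ (norm_pos_iff.mpr (hΦ0 v (frontier_subset_closure hv)))]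
    exact hM v hv) hz
  rwa [norm_div, div_le_iff₀ (norm_pos_iff.mpr (hΦ0 z hz))] at key

def chord (ζ v : ℂ) : ℂ := (ζ - v) * conj ζ

def peak (ζ : ℂ) (ρ : ℝ) (v : ℂ) : ℂ := chord ζ v / (chord ζ v + ρ)

section Peak

variable {ζ v : ℂ} {ρ : ℝ}

lemma norm_chord (hζ : ‖ζ‖ = 1) : ‖chord ζ v‖ = ‖v - ζ‖ := by
  rw [chord, norm_mul, Complex.norm_conj, hζ, mul_one, norm_sub_rev]

lemma re_chord_nonneg (hζ : ‖ζ‖ = 1) (hv : ‖v‖ ≤ 1) : 0 ≤ (chord ζ v).re := by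
  have hζζ : ζ * conj ζ = 1 := by
    rw [Complex.mul_conj, Complex.normSq_eq_norm_sq, hζ]; norm_num
  have hle : (v * conj ζ).re ≤ 1 := by
    calc (v * conj ζ).re ≤ ‖v * conj ζ‖ := Complex.re_le_norm _
      _ ≤ 1 := by rwa [norm_mul, Complex.norm_conj, hζ, mul_one]
  rw [chord, sub_mul, hζζ, Complex.sub_re, Complex.one_re]
  linarith

lemma differentiable_chord : Differentiable ℂ (chord ζ) := by
  unfold chord; fun_prop

variable (hζ : ‖ζ‖ = 1) (hρ : 0 < ρ)
include hζ hρ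

lemma chord_add_ne_zero (hv : ‖v‖ ≤ 1) : chord ζ v + ρ ≠ 0 :=
  Complex.add_ofReal_ne_zero (re_chord_nonneg hζ hv) hρ

lemma re_peak_nonneg (hv : ‖v‖ ≤ 1) : 0 ≤ (peak ζ ρ v).re :=
  Complex.re_div_add_ofReal_nonneg (re_chord_nonneg hζ hv) hρ

lemma half_le_re_peak (hv : ‖v‖ ≤ 1) (hvζ : ρ ≤ ‖v - ζ‖) : 1 / 2 ≤ (peak ζ ρ v).re :=
  Complex.half_le_re_div_add_ofReal (re_chord_nonneg hζ hv) hρ (by rwa [norm_chord hζ])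

lemma re_peak_le (hv : ‖v‖ ≤ 1) : (peak ζ ρ v).re ≤ ‖v - ζ‖ / ρ :=
  norm_chord hζ (v := v) ▸ Complex.re_div_add_ofReal_le (re_chord_nonneg hζ hv) hρ

lemma differentiableOn_peak : DifferentiableOn ℂ (peak ζ ρ) (closedBall (0 : ℂ) 1) :=
  differentiable_chord.differentiableOn.div (differentiable_chord.add_const _).differentiableOn
    fun _ hu => chord_add_ne_zero hζ hρ (mem_closedBall_zero_iff.mp hu)

end Peak

def peakWeight (ζ : ℂ) (ρ t L : ℝ) (v : ℂ) : ℂ :=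
  ((t : ℂ) + chord ζ v) * Complex.exp (((2 * L : ℝ) : ℂ) * peak ζ ρ v)

section PeakWeight

variable {ζ : ℂ} {ρ t L : ℝ}

lemma norm_peakWeight (v : ℂ) :
    ‖peakWeight ζ ρ t L v‖ = ‖(t : ℂ) + chord ζ v‖ * Real.exp (2 * L * (peak ζ ρ v).re) := by
  simp only [peakWeight, norm_mul, Complex.norm_exp, Complex.re_ofReal_mul]

lemma peakWeight_ne_zero (hζ : ‖ζ‖ = 1) (ht : 0 < t) {v : ℂ} (hv : ‖v‖ ≤ 1) :
    peakWeight ζ ρ t L v ≠ 0 :=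
  mul_ne_zero (by rw [add_comm]; exact chord_add_ne_zero hζ ht hv) (Complex.exp_ne_zero _)

lemma diffContOnCl_peakWeight (hζ : ‖ζ‖ = 1) (hρ : 0 < ρ) :
    DiffContOnCl ℂ (peakWeight ζ ρ t L) (ball (0 : ℂ) 1) := by
  refine DifferentiableOn.diffContOnCl ?_
  rw [closure_ball _ one_ne_zero]
  exact ((differentiable_const _).add differentiable_chord).differentiableOn.mul
    ((differentiableOn_peak hζ hρ).const_mul _).cexp

end PeakWeight

section BoundaryEstimate

variable {ω : ModulusOfContinuity} {f : ℂ → ℂ} {ζ : ℂ} {ρ ε C : ℝ}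

lemma norm_sub_le_exp_re_peak (hζ : ‖ζ‖ = 1) (hρ : 0 < ρ) (hε : 0 ≤ ε) {L : ℝ} (hL : 0 ≤ L)
    (hCL : C ≤ ε * Real.exp L)
    (hnear : ∀ ξ ∈ sphere (0 : ℂ) 1, ‖ξ - ζ‖ ≤ ρ → ‖f ξ - f ζ‖ ≤ ε * ω ‖ξ - ζ‖)
    (hfar : ∀ ξ ∈ sphere (0 : ℂ) 1, ‖f ξ - f ζ‖ ≤ C * ω ‖ξ - ζ‖)
    {x : ℂ} (hx : x ∈ sphere (0 : ℂ) 1) :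
    ‖f x - f ζ‖ ≤ ε * Real.exp (2 * L * (peak ζ ρ x).re) * ω ‖x - ζ‖ := by
  have hx1 : ‖x‖ = 1 := by simpa using hx
  have hω := ω.apply_nonneg (norm_nonneg (x - ζ)) (norm_sub_le_two hx1.le hζ.le)
  rcases le_or_gt ‖x - ζ‖ ρ with h | h
  · calc ‖f x - f ζ‖ ≤ ε * 1 * ω ‖x - ζ‖ := by simpa using hnear x hx h
      _ ≤ _ := by
        gcongr
        exact Real.one_le_exp (mul_nonneg (by positivity) (re_peak_nonneg hζ hρ hx1.le))
  · calc ‖f x - f ζ‖ ≤ ε * Real.exp L * ω ‖x - ζ‖ := (hfar x hx).trans (by gcongr)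
      _ ≤ _ := by
        gcongr
        nlinarith [half_le_re_peak hζ hρ hx1.le h.le]

lemma norm_sub_le_mul_norm_peakWeight (hζ : ‖ζ‖ = 1) (hρ : 0 < ρ) (hε : 0 ≤ ε) {t L : ℝ}
    (ht : 0 < t) (ht2 : t ≤ 2) (hL : 0 ≤ L) (hCL : C ≤ ε * Real.exp L)
    (hnear : ∀ ξ ∈ sphere (0 : ℂ) 1, ‖ξ - ζ‖ ≤ ρ → ‖f ξ - f ζ‖ ≤ ε * ω ‖ξ - ζ‖)
    (hfar : ∀ ξ ∈ sphere (0 : ℂ) 1, ‖f ξ - f ζ‖ ≤ C * ω ‖ξ - ζ‖)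
    {x : ℂ} (hx : x ∈ sphere (0 : ℂ) 1) :
    ‖f x - f ζ‖ ≤ 2 * ε * ω t / t * ‖peakWeight ζ ρ t L x‖ := by
  have hx1 : ‖x‖ = 1 := by simpa using hx
  have hωt := ω.apply_nonneg ht.le ht2
  calc ‖f x - f ζ‖ ≤ ε * Real.exp (2 * L * (peak ζ ρ x).re) * ω ‖x - ζ‖ :=
        norm_sub_le_exp_re_peak hζ hρ hε hL hCL hnear hfar hx
    _ ≤ ε * Real.exp (2 * L * (peak ζ ρ x).re) * (ω t / t * (t + ‖chord ζ x‖)) := by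
        rw [norm_chord hζ]
        gcongr
        exact ω.apply_le_div_mul_add ht ht2 (norm_nonneg _) (norm_sub_le_two hx1.le hζ.le)
    _ ≤ ε * Real.exp (2 * L * (peak ζ ρ x).re) * (ω t / t * (2 * ‖(t : ℂ) + chord ζ x‖)) := by
        gcongr
        exact Complex.add_norm_le_two_mul_norm_ofReal_add ht.le (re_chord_nonneg hζ hx1.le)
    _ = 2 * ε * ω t / t * ‖peakWeight ζ ρ t L x‖ := by rw [norm_peakWeight]; ring

/-- Maximum principle for `(f - f ζ) / Φ` with `Φ = peakWeight ζ ρ t L`, `t = ‖z - ζ‖` and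
`C = ε e^L`: the exponential factor of `Φ` trades `C` for `ε` on the circle away from `ζ`,
and is at most `e^(L/2)` at `z`. -/
lemma norm_sub_le_four_sqrt_mul_of_sphere (hc : ContinuousOn f (closedBall (0 : ℂ) 1))
    (hd : DifferentiableOn ℂ f (ball (0 : ℂ) 1)) (hζ : ‖ζ‖ = 1) (hρ : 0 < ρ) (hε : 0 < ε)
    (hεC : ε ≤ C)
    (hnear : ∀ ξ ∈ sphere (0 : ℂ) 1, ‖ξ - ζ‖ ≤ ρ → ‖f ξ - f ζ‖ ≤ ε * ω ‖ξ - ζ‖)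
    (hfar : ∀ ξ ∈ sphere (0 : ℂ) 1, ‖f ξ - f ζ‖ ≤ C * ω ‖ξ - ζ‖)
    {z : ℂ} (hz : ‖z‖ ≤ 1) (hzρ : ‖z - ζ‖ ≤ ρ / 4) :
    ‖f z - f ζ‖ ≤ 4 * √(ε * C) * ω ‖z - ζ‖ := by
  rcases eq_or_ne z ζ with rfl | hne
  · simp [ω.zero]
  set t := ‖z - ζ‖
  have ht : 0 < t := norm_pos_iff.mpr (sub_ne_zero.mpr hne)
  have ht2 : t ≤ 2 := norm_sub_le_two hz hζ.le
  set L := Real.log (C / ε)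
  have hL : 0 ≤ L := Real.log_nonneg ((one_le_div hε).mpr hεC)
  have hCL : C = ε * Real.exp L := by
    rw [Real.exp_log (div_pos (hε.trans_le hεC) hε)]; field_simp
  have hbdry : ∀ x ∈ frontier (ball (0 : ℂ) 1),
      ‖f x - f ζ‖ ≤ 2 * ε * ω t / t * ‖peakWeight ζ ρ t L x‖ := fun x hx => by
    rw [frontier_ball _ one_ne_zero] at hx
    exact norm_sub_le_mul_norm_peakWeight hζ hρ hε.le ht ht2 hL hCL.le hnear hfar hx
  have hmax := norm_le_mul_norm_of_forall_mem_frontier isBounded_ball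
    ((DiffContOnCl.mk_ball hd hc).sub_const (f ζ)) (diffContOnCl_peakWeight hζ hρ)
    (fun v hv => peakWeight_ne_zero hζ ht (by
      rwa [closure_ball _ one_ne_zero, mem_closedBall_zero_iff] at hv))
    hbdry (by rwa [closure_ball _ one_ne_zero, mem_closedBall_zero_iff])
  have hΦz : ‖peakWeight ζ ρ t L z‖ ≤ 2 * t * Real.exp (L / 2) := by
    rw [norm_peakWeight]
    gcongr
    · calc ‖(t : ℂ) + chord ζ z‖ ≤ ‖(t : ℂ)‖ + ‖chord ζ z‖ := norm_add_le _ _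
        _ = 2 * t := by rw [norm_chord hζ, Complex.norm_real, Real.norm_of_nonneg ht.le]; ring
    · have := re_peak_le hζ hρ hz
      have : ‖z - ζ‖ / ρ ≤ 1 / 4 := by rw [div_le_iff₀ hρ]; linarith
      nlinarith
  have hsqrt : √(ε * C) = ε * Real.exp (L / 2) := by
    rw [hCL, ← mul_assoc, Real.sqrt_mul (mul_self_nonneg ε), Real.sqrt_mul_self hε.le,
      Real.exp_half]
  calc ‖f z - f ζ‖ ≤ 2 * ε * ω t / t * ‖peakWeight ζ ρ t L z‖ := hmax
    _ ≤ 2 * ε * ω t / t * (2 * t * Real.exp (L / 2)) := by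
        have := ω.apply_nonneg ht.le ht2
        gcongr
    _ = 4 * √(ε * C) * ω t := by rw [hsqrt]; field_simp; ring

end BoundaryEstimate

section InteriorEstimate

variable {ω : ModulusOfContinuity} {f : ℂ → ℂ} {ε : ℝ}

/-- Schwarz lemma on `ball z (1 - ‖z‖)`, which lies in the unit disk. -/
lemma norm_sub_le_of_radial_bound (hd : DifferentiableOn ℂ f (ball (0 : ℂ) 1)) (hε : 0 ≤ ε)
    {z ξ w : ℂ} (hz : ‖z‖ < 1) (hξ : ‖z - ξ‖ = 1 - ‖z‖)
    (hloc : ∀ v, ‖v‖ ≤ 1 → ‖v - ξ‖ ≤ 2 * (1 - ‖z‖) → ‖f v - f ξ‖ ≤ ε * ω ‖v - ξ‖)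
    (hw : ‖z - w‖ < 1 - ‖z‖) :
    ‖f z - f w‖ ≤ 3 * ε * ω ‖z - w‖ := by
  set d := 1 - ‖z‖
  have hd0 : 0 < d := by linarith
  have hd1 : d ≤ 1 := by linarith [norm_nonneg z]
  have hball : ball z d ⊆ ball (0 : ℂ) 1 :=
    ball_subset_ball' (by rw [dist_zero_right]; linarith)
  have hωd := ω.apply_nonneg hd0.le (by linarith)
  have hmaps : MapsTo f (ball z d) (closedBall (f z) (3 * ε * ω d)) := by
    intro v hv
    have hv1 : ‖v‖ ≤ 1 := (mem_ball_zero_iff.mp (hball hv)).le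
    have hvz : ‖v - z‖ < d := by rwa [mem_ball, dist_eq_norm] at hv
    have hvξ : ‖v - ξ‖ ≤ 2 * d := by linarith [norm_sub_le_norm_sub_add_norm_sub v z ξ]
    have h₁ : ‖f v - f ξ‖ ≤ ε * (2 * ω d) := (hloc v hv1 hvξ).trans (by
      gcongr
      exact ω.apply_le_mul_apply one_le_two (norm_nonneg _) (by linarith) hd0 (by linarith) hvξ)
    have h₂ : ‖f z - f ξ‖ ≤ ε * ω d := hξ ▸ hloc z hz.le (by rw [hξ]; linarith)
    rw [mem_closedBall, dist_eq_norm]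
    linarith [norm_sub_le_norm_sub_add_norm_sub (f v) (f ξ) (f z), norm_sub_rev (f ξ) (f z)]
  have hschwarz := Complex.dist_le_div_mul_dist_of_mapsTo_ball (hd.mono hball) hmaps
    (by rwa [mem_ball, dist_eq_norm, norm_sub_rev])
  rw [dist_eq_norm, dist_eq_norm, norm_sub_rev, norm_sub_rev w] at hschwarz
  have hscale := ω.mul_apply_le_mul_apply (norm_nonneg (z - w)) hw.le (by linarith)
  calc ‖f z - f w‖ ≤ 3 * ε * ω d / d * ‖z - w‖ := hschwarz
    _ = 3 * ε * (‖z - w‖ * ω d) / d := by ring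
    _ ≤ 3 * ε * (d * ω ‖z - w‖) / d := by gcongr
    _ = 3 * ε * ω ‖z - w‖ := by field_simp

/-- Close pairs are handled by `norm_sub_le_of_radial_bound`; otherwise `z` and `w` are
within `‖z - w‖` of `ξ` and `ζ`, so `‖ξ - ζ‖ ≤ 3 ‖z - w‖`. -/
lemma norm_sub_le_of_radial_bounds (hd : DifferentiableOn ℂ f (ball (0 : ℂ) 1))
    {ε₁ ε₂ : ℝ} (hε₁ : 0 ≤ ε₁) (hε₂ : 0 ≤ ε₂) {z w ξ ζ : ℂ} (hz : ‖z‖ < 1) (hw : ‖w‖ < 1)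
    (hξ : ‖z - ξ‖ = 1 - ‖z‖) (hζ : ‖w - ζ‖ = 1 - ‖w‖)
    (hξζ : ‖f ξ - f ζ‖ ≤ ε₁ * ω ‖ξ - ζ‖)
    (hlocξ : ∀ v, ‖v‖ ≤ 1 → ‖v - ξ‖ ≤ 2 * (1 - ‖z‖) → ‖f v - f ξ‖ ≤ ε₂ * ω ‖v - ξ‖)
    (hlocζ : ∀ v, ‖v‖ ≤ 1 → ‖v - ζ‖ ≤ 2 * (1 - ‖w‖) → ‖f v - f ζ‖ ≤ ε₂ * ω ‖v - ζ‖) :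
    ‖f z - f w‖ ≤ (3 * ε₁ + 3 * ε₂) * ω ‖z - w‖ := by
  set t := ‖z - w‖
  have ht2 : t ≤ 2 := norm_sub_le_two hz.le hw.le
  have hωt := ω.apply_nonneg (norm_nonneg _) ht2
  rcases lt_or_ge t (1 - ‖z‖) with hzt | hzt
  · nlinarith [norm_sub_le_of_radial_bound hd hε₂ hz hξ hlocξ hzt]
  rcases lt_or_ge t (1 - ‖w‖) with hwt | hwt
  · have := norm_sub_le_of_radial_bound hd hε₂ hw hζ hlocζ (by rwa [norm_sub_rev])
    rw [norm_sub_rev, norm_sub_rev w] at this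
    nlinarith
  have ht : 0 < t := by linarith
  have hzξ : ‖f z - f ξ‖ ≤ ε₂ * ω t := by
    refine (hξ ▸ hlocξ z hz.le (by rw [hξ]; linarith)).trans ?_
    gcongr
    exact ω.apply_le_apply (by linarith) hzt ht2
  have hwζ : ‖f w - f ζ‖ ≤ ε₂ * ω t := by
    refine (hζ ▸ hlocζ w hw.le (by rw [hζ]; linarith)).trans ?_
    gcongr
    exact ω.apply_le_apply (by linarith) hwt ht2
  have hξζt : ‖ξ - ζ‖ ≤ 3 * t := by
    linarith [norm_sub_le_norm_sub_add_norm_sub ξ z ζ, norm_sub_le_norm_sub_add_norm_sub z w ζ,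
      norm_sub_rev ξ z]
  have hξ1 : ‖ξ‖ ≤ 1 := by linarith [norm_le_norm_add_norm_sub' ξ z, norm_sub_rev ξ z]
  have hζ1 : ‖ζ‖ ≤ 1 := by linarith [norm_le_norm_add_norm_sub' ζ w, norm_sub_rev ζ w]
  have hξζ' : ‖f ξ - f ζ‖ ≤ ε₁ * (3 * ω t) := hξζ.trans (by
    gcongr
    exact ω.apply_le_mul_apply (by norm_num) (norm_nonneg _) (norm_sub_le_two hξ1 hζ1) ht ht2
      hξζt)
  calc ‖f z - f w‖ ≤ ‖f z - f ξ‖ + ‖f ξ - f ζ‖ + ‖f w - f ζ‖ := by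
        linarith [norm_sub_le_norm_sub_add_norm_sub (f z) (f ξ) (f w),
          norm_sub_le_norm_sub_add_norm_sub (f ξ) (f ζ) (f w), norm_sub_rev (f ζ) (f w)]
    _ ≤ (3 * ε₁ + 3 * ε₂) * ω t := by nlinarith

end InteriorEstimate

section Inclusions

variable {ω : ModulusOfContinuity} {E : Set ℂ} {f : ℂ → ℂ}

lemma MemLip.exists_pos_norm_sub_le (h : MemLip ω f) :
    ∃ C > 0, ∀ ξ ∈ sphere (0 : ℂ) 1, ∀ ζ ∈ sphere (0 : ℂ) 1, ‖f ξ - f ζ‖ ≤ C * ω ‖ξ - ζ‖ := by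
  obtain ⟨-, -, C, hC⟩ := h
  refine ⟨max C 1, by positivity, fun ξ hξ ζ hζ => ?_⟩
  rcases eq_or_ne ξ ζ with rfl | hne
  · simp [ω.zero]
  have hω := ω.apply_nonneg (norm_nonneg (ξ - ζ))
    (norm_sub_le_two (mem_sphere_zero_iff_norm.mp hξ).le (mem_sphere_zero_iff_norm.mp hζ).le)
  exact (hC ξ hξ ζ hζ hne).trans (by gcongr; exact le_max_left _ _)

lemma JCond.exists_norm_sub_le (h : JCond ω E f) {ε : ℝ} (hε : 0 < ε) :
    ∃ δ > 0, ∀ ξ ∈ sphere (0 : ℂ) 1, ∀ ζ ∈ sphere (0 : ℂ) 1, infDist ξ E ≤ δ → infDist ζ E ≤ δ →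
      ‖f ξ - f ζ‖ ≤ ε * ω ‖ξ - ζ‖ := by
  obtain ⟨δ, hδ, hpair⟩ := h ε hε
  refine ⟨δ, hδ, fun ξ hξ ζ hζ hξE hζE => ?_⟩
  rcases eq_or_ne ξ ζ with rfl | hne
  · simp [ω.zero]
  exact hpair ξ ⟨hξ, hξE⟩ ζ ⟨hζ, hζE⟩ hne

/-- The boundary arc of radius `8 (1 - ‖z‖)` about the radial projection `ξ` of `z` lies
within `10 d(z, E)` of `E`, because `1 - ‖z‖ ≤ d(z, E)`. -/
lemma exists_radial_bound (hE : E ⊆ sphere (0 : ℂ) 1) (hc : ContinuousOn f (closedBall (0 : ℂ) 1))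
    (hd : DifferentiableOn ℂ f (ball (0 : ℂ) 1)) {η C δ : ℝ} (hη : 0 < η) (hηC : η ≤ C)
    (hfar : ∀ ξ ∈ sphere (0 : ℂ) 1, ∀ ζ ∈ sphere (0 : ℂ) 1, ‖f ξ - f ζ‖ ≤ C * ω ‖ξ - ζ‖)
    (hpair : ∀ ξ ∈ sphere (0 : ℂ) 1, ∀ ζ ∈ sphere (0 : ℂ) 1, infDist ξ E ≤ δ →
      infDist ζ E ≤ δ → ‖f ξ - f ζ‖ ≤ η * ω ‖ξ - ζ‖)
    {z : ℂ} (hz : ‖z‖ < 1) (hzE : infDist z E ≤ δ / 10) :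
    ∃ ξ : ℂ, ‖ξ‖ = 1 ∧ ‖z - ξ‖ = 1 - ‖z‖ ∧ infDist ξ E ≤ δ ∧
      ∀ v, ‖v‖ ≤ 1 → ‖v - ξ‖ ≤ 2 * (1 - ‖z‖) → ‖f v - f ξ‖ ≤ 4 * √(η * C) * ω ‖v - ξ‖ := by
  obtain ⟨ξ, hξ1, hξ⟩ := exists_norm_eq_one_norm_sub_eq hz.le
  have hnear : ∀ y, ‖y - z‖ ≤ 9 * (1 - ‖z‖) → infDist y E ≤ δ := fun y hy => by
    linarith [infDist_le_mul_infDist hE (by norm_num) hy]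
  have hξE : infDist ξ E ≤ δ := hnear ξ (by rw [norm_sub_rev, hξ]; linarith)
  have hξs : ξ ∈ sphere (0 : ℂ) 1 := mem_sphere_zero_iff_norm.mpr hξ1
  refine ⟨ξ, hξ1, hξ, hξE, fun v hv hvξ => ?_⟩
  refine norm_sub_le_four_sqrt_mul_of_sphere hc hd hξ1 (ρ := 8 * (1 - ‖z‖)) (by linarith) hη hηC
    (fun ξ' hξ' h => hpair ξ' hξ' ξ hξs (hnear ξ' ?_) hξE) (fun ξ' hξ' => hfar ξ' hξ' ξ hξs) hv
    (by linarith)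
  linarith [norm_sub_le_norm_sub_add_norm_sub ξ' ξ z, norm_sub_rev ξ z]

lemma memK_of_memJ (hE : E ⊆ sphere (0 : ℂ) 1) (h : MemJ ω E f) : MemK ω E f := by
  obtain ⟨⟨hlip, hvan⟩, hJ⟩ := h
  refine ⟨⟨hlip, hvan⟩, fun ε hε => ?_⟩
  obtain ⟨C, hC, hfar⟩ := hlip.exists_pos_norm_sub_le
  have hsmall : ∀ᶠ η in 𝓝[>] (0 : ℝ), η ≤ C ∧ 3 * η + 3 * (4 * √(η * C)) < ε := by
    have hlim : Tendsto (fun η : ℝ => 3 * η + 3 * (4 * √(η * C))) (𝓝 0) (𝓝 0) := by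
      have : Continuous (fun η : ℝ => 3 * η + 3 * (4 * √(η * C))) := by fun_prop
      simpa using this.tendsto 0
    exact nhdsWithin_le_nhds ((eventually_le_nhds hC).and (hlim.eventually (gt_mem_nhds hε)))
  obtain ⟨η, ⟨hηC, hηε⟩, hη⟩ := (hsmall.and self_mem_nhdsWithin).exists
  obtain ⟨δ, hδ, hpair⟩ := hJ.exists_norm_sub_le hη
  refine ⟨δ / 10, by positivity, fun z hz w hw _ hzE hwE => ?_⟩
  rw [mem_ball_zero_iff] at hz hw
  obtain ⟨ξ, hξ1, hξ, hξE, hlocξ⟩ := exists_radial_bound hE hlip.1 hlip.2.1 hη hηC hfar hpair hz hzE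
  obtain ⟨ζ, hζ1, hζ, hζE, hlocζ⟩ := exists_radial_bound hE hlip.1 hlip.2.1 hη hηC hfar hpair hw hwE
  have hωzw := ω.apply_nonneg (norm_nonneg (z - w)) (norm_sub_le_two hz.le hw.le)
  calc ‖f z - f w‖ ≤ (3 * η + 3 * (4 * √(η * C))) * ω ‖z - w‖ :=
        norm_sub_le_of_radial_bounds hlip.2.1 hη.le (by positivity) hz hw hξ hζ
          (hpair ξ (mem_sphere_zero_iff_norm.mpr hξ1) ζ (mem_sphere_zero_iff_norm.mpr hζ1) hξE hζE)
          hlocξ hlocζ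
    _ ≤ ε * ω ‖z - w‖ := by gcongr

lemma jCond_of_memK (h : MemK ω E f) : JCond ω E f := by
  obtain ⟨⟨⟨hc, -⟩, -⟩, hK⟩ := h
  intro ε hε
  obtain ⟨δ, hδ, hKδ⟩ := hK ε hε
  refine ⟨δ / 2, by positivity, ?_⟩
  rintro ξ ⟨hξ, hξE⟩ ζ ⟨hζ, hζE⟩ hne
  rw [mem_sphere_zero_iff_norm] at hξ hζ
  refine le_of_tendsto ((tendsto_apply_smul_nhdsLT_one hc hξ.le).sub
    (tendsto_apply_smul_nhdsLT_one hc hζ.le)).norm ?_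
  filter_upwards [Ioo_mem_nhdsLT (show max 0 (1 - δ / 2) < 1 by
    apply max_lt one_pos; linarith)] with r ⟨hr, hr1⟩
  rw [max_lt_iff] at hr
  have hball : ∀ x : ℂ, ‖x‖ = 1 → r • x ∈ ball (0 : ℂ) 1 := fun x hx => by
    rwa [mem_ball_zero_iff, norm_smul, hx, mul_one, Real.norm_of_nonneg hr.1.le]
  have hdist : ∀ x : ℂ, ‖x‖ = 1 → infDist x E ≤ δ / 2 → infDist (r • x) E ≤ δ := fun x hx hxE =>
    (infDist_smul_le hx hr1.le).trans (by linarith)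
  have hrξζ : ‖r • ξ - r • ζ‖ = r * ‖ξ - ζ‖ := by
    rw [← smul_sub, norm_smul, Real.norm_of_nonneg hr.1.le]
  have hξζ2 : ‖ξ - ζ‖ ≤ 2 := norm_sub_le_two hξ.le hζ.le
  calc ‖f (r • ξ) - f (r • ζ)‖ ≤ ε * ω ‖r • ξ - r • ζ‖ :=
        hKδ _ (hball ξ hξ) _ (hball ζ hζ) ((smul_right_injective ℂ hr.1.ne').ne hne)
          (hdist ξ hξ hξE) (hdist ζ hζ hζE)
    _ ≤ ε * ω ‖ξ - ζ‖ := by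
        rw [hrξζ]
        gcongr
        exact ω.apply_le_apply (mul_nonneg hr.1.le (norm_nonneg _))
          (by nlinarith [norm_nonneg (ξ - ζ)]) hξζ2

end Inclusions

theorem J_eq_K_general
    (ω : ModulusOfContinuity)
    (E : Set ℂ) (hEsub : E ⊆ sphere (0:ℂ) 1) :
    {f : ℂ → ℂ | MemJ ω E f} = {f : ℂ → ℂ | MemK ω E f} :=
  Set.ext fun _ => ⟨memK_of_memJ hEsub, fun h => ⟨h.1, jCond_of_memK h⟩⟩

/-- **Proposition (coincide).** `J_ω(E) = K_ω(E)`. -/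
theorem J_eq_K
    (ω : ModulusOfContinuity)
    (E : Set ℂ) (hEsub : E ⊆ sphere (0:ℂ) 1) (hEclosed : IsClosed E) (hEnull : CircNull E) :
    {f : ℂ → ℂ | MemJ ω E f} = {f : ℂ → ℂ | MemK ω E f} :=
  J_eq_K_general ω E hEsub
end
end
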